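/- arXiv:2107.14193 — 7 statements merged into one kernel-verified Lean document; each statement's English description precedes it below -/
import Mathlib

section
/- For every odd integer n with n ≥ 3, the infinite-speed cop number of the n×n grid satisfies c_∞(P_n □ P_n) ≤ n − 1. -/
open SimpleGraph

variable {V : Type*}

/-- Given cop positions `c`, the infinitely fast robber can move from `r` to `r'` iff
there is a walk in `G` from `r` to `r'` none of whose vertices (including the
endpoints) is occupied by a cop. -/
def RobberMove {k : ℕ} (G : SimpleGraph V) (c : Fin k → V) (r r' : V) : Prop :=
  ∃ w : G.Walk r r', ∀ v ∈ w.support, ∀ i, c i ≠ v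

/-- `c'` is a legal move of the cops from positions `c`: each cop either stays put
or moves to an adjacent vertex. -/
def CopMove {k : ℕ} (G : SimpleGraph V) (c c' : Fin k → V) : Prop :=
  ∀ i, c' i = c i ∨ G.Adj (c i) (c' i)

/-- With the cops at positions `c`, the robber at `r`, and the cops to move, the cops
can force capture of the infinitely fast robber after finitely many further rounds.
(If after the cops' move a cop stands on the robber's vertex, then the robber has no
legal move, so the hypothesis of `step` is vacuous: this is capture.  Well-foundedness
of the inductive predicate guarantees that capture occurs after finitely many rounds.) -/
inductive CopsCatch {k : ℕ} (G : SimpleGraph V) : (Fin k → V) → V → Prop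
  | step (c : Fin k → V) (r : V) (c' : Fin k → V) (hmove : CopMove G c c')
      (h : ∀ r', RobberMove G c' r r' → CopsCatch G c' r') : CopsCatch G c r

/-- `k` cops have a winning strategy on `G` against an infinitely fast robber:
they can choose initial positions such that, wherever the robber then starts,
they can force capture. -/
def CopsWin (G : SimpleGraph V) (k : ℕ) : Prop :=
  ∃ c₀ : Fin k → V, ∀ r₀ : V, CopsCatch G c₀ r₀

/-- The infinite-speed cop number of `G`: the least number of cops with a
winning strategy. -/
noncomputable def infCopNumber (G : SimpleGraph V) : ℕ :=
  sInf {k | CopsWin G k}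

/-!
The `n - 1` cops start in pairs on the odd diagonal vertices `(2j + 1, 2j + 1)`; as `n` is
odd these pairs occupy every other diagonal vertex, from the second to the second last.
A robber on an odd diagonal vertex is caught at once. A robber on an even diagonal vertex
has all of his neighbours on the two adjacent pairs, so these pairs surround him in one
move and capture him in the next. A robber above the diagonal is separated from the
diagonal by one move of the cops onto the line `y = x + 1`, which they then push upwards
one step per round until no vertex is left above it; a robber below the diagonal is
handled by the symmetry `(x, y) ↦ (y, x)`, which fixes the starting position.
-/

section Game

variable {W : Type*} {G : SimpleGraph V} {k : ℕ}

lemma CopMove.refl (c : Fin k → V) : CopMove G c c := fun _ => Or.inl rfl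

lemma RobberMove.start_notMem_range {c : Fin k → V} {r r' : V} (hm : RobberMove G c r r') :
    r ∉ Set.range c := by
  obtain ⟨w, hw⟩ := hm
  rintro ⟨i, hi⟩
  exact hw r w.start_mem_support i hi

def CopsEnclose (G : SimpleGraph V) (c : Fin k → V) (A : Set V) : Prop :=
  ∀ v ∈ A, ∀ w, G.Adj v w → w ∈ A ∨ w ∈ Set.range c

lemma CopsEnclose.mem_of_walk {c : Fin k → V} {A : Set V} (hA : CopsEnclose G c A) :
    ∀ {u v : V} (w : G.Walk u v), (∀ x ∈ w.support, ∀ i, c i ≠ x) → u ∈ A → v ∈ A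
  | _, _, .nil, _, hu => hu
  | _, _, .cons h p, hp, hu => by
    refine hA.mem_of_walk p (fun x hx => hp x (List.mem_cons_of_mem _ hx)) ?_
    refine (hA _ hu _ h).resolve_right ?_
    rintro ⟨i, hi⟩
    exact hp _ (List.mem_cons_of_mem _ p.start_mem_support) i hi

lemma RobberMove.mem_of_copsEnclose {c : Fin k → V} {A : Set V} {r r' : V}
    (hA : CopsEnclose G c A) (hr : r ∈ A) (hm : RobberMove G c r r') : r' ∈ A :=
  let ⟨w, hw⟩ := hm
  hA.mem_of_walk w hw hr

lemma CopsCatch.of_copsEnclose {c c' : Fin k → V} {A : Set V} {r : V}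
    (hmove : CopMove G c c') (hA : CopsEnclose G c' A) (hr : r ∈ A ∨ r ∈ Set.range c')
    (hwin : ∀ r' ∈ A, CopsCatch G c' r') : CopsCatch G c r :=
  .step c r c' hmove fun r' hm =>
    hwin r' (hm.mem_of_copsEnclose hA (hr.resolve_right hm.start_notMem_range))

lemma CopsCatch.of_mem_range {c : Fin k → V} {r : V} (hr : r ∈ Set.range c) :
    CopsCatch G c r :=
  .of_copsEnclose (A := ∅) (.refl c) (fun _ h => h.elim) (.inr hr) fun _ h => h.elim

lemma CopsCatch.of_adj {c : Fin k → V} {r : V} {i : Fin k} (h : G.Adj (c i) r) :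
    CopsCatch G c r := by
  refine .of_copsEnclose (A := ∅) (c' := Function.update c i r) ?_ (fun _ h => h.elim)
    (.inr ⟨i, by simp⟩) fun _ h => h.elim
  intro j
  rcases eq_or_ne j i with rfl | hj
  · simpa using .inr h
  · simp [hj]

lemma CopsCatch.of_surround {c c' : Fin k → V} {r w : V} (hmove : CopMove G c c')
    (hsurround : ∀ w, G.Adj r w → w ∈ Set.range c') (hw : G.Adj r w) : CopsCatch G c r := by
  refine .of_copsEnclose hmove (A := {r}) ?_ (.inl rfl) ?_
  · rintro v rfl u hu
    exact .inr (hsurround u hu)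
  · rintro r' rfl
    obtain ⟨i, hi⟩ := hsurround w hw
    exact .of_adj (i := i) (hi ▸ hw.symm)

lemma CopsCatch.map {H : SimpleGraph W} (f : G ≃g H) {c : Fin k → V} {r : V}
    (h : CopsCatch G c r) : CopsCatch H (fun i => f (c i)) (f r) := by
  induction h with
  | step c r c' hmove _ ih =>
    refine .step _ _ (fun i => f (c' i))
      (fun i => (hmove i).imp (congrArg f) f.map_adj_iff.mpr) ?_
    rintro r' ⟨w, hw⟩
    have hback : RobberMove G c' r (f.symm r') := by
      refine ⟨(w.map f.symm.toHom).copy (f.symm_apply_apply r) rfl, ?_⟩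
      intro x hx i hcx
      rw [Walk.support_copy, Walk.support_map] at hx
      obtain ⟨u, hu, rfl⟩ := List.mem_map.mp hx
      exact hw u hu i (by simp [hcx])
    simpa using ih _ hback

lemma infCopNumber_le (h : CopsWin G k) : infCopNumber G ≤ k :=
  Nat.sInf_le h

end Game

namespace SquareGrid

variable {n : ℕ}

def pairVertex (ℓ : Fin (n - 1)) : Fin n :=
  ⟨2 * (ℓ.val / 2) + 1, by omega⟩

def diagonalPairs (n : ℕ) (ℓ : Fin (n - 1)) : Fin n × Fin n :=
  (pairVertex ℓ, pairVertex ℓ)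

def wall (n k : ℕ) (ℓ : Fin (n - 1)) : Fin n × Fin n :=
  (⟨ℓ.val, by omega⟩, ⟨min (ℓ.val + k) (n - 1), by omega⟩)

lemma grid_adj_iff {a b : Fin n × Fin n} :
    (pathGraph n □ pathGraph n).Adj a b ↔
      (a.1.val + 1 = b.1.val ∨ b.1.val + 1 = a.1.val) ∧ a.2 = b.2 ∨
      (a.2.val + 1 = b.2.val ∨ b.2.val + 1 = a.2.val) ∧ a.1 = b.1 := by
  rw [boxProd_adj, pathGraph_adj, pathGraph_adj]

lemma mem_range_wall {k : ℕ} (hk : 1 ≤ k) {r : Fin n × Fin n} (hr : r.1.val + k = r.2.val) :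
    r ∈ Set.range (wall n k) :=
  ⟨⟨r.1.val, by omega⟩, Prod.ext rfl (Fin.ext (by simp only [wall]; omega))⟩

lemma mem_above_or_mem_range_wall {k : ℕ} (hk : 1 ≤ k) {r : Fin n × Fin n}
    (hr : r.1.val + k ≤ r.2.val) :
    r ∈ {v : Fin n × Fin n | v.1.val + k < v.2.val} ∨ r ∈ Set.range (wall n k) :=
  hr.lt_or_eq.imp id (mem_range_wall hk)

lemma copsEnclose_above_wall {k : ℕ} (hk : 1 ≤ k) :
    CopsEnclose (pathGraph n □ pathGraph n) (wall n k) {v | v.1.val + k < v.2.val} := by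
  intro v hv w hvw
  refine mem_above_or_mem_range_wall hk ?_
  simp only [Set.mem_ofPred_eq] at hv
  rcases grid_adj_iff.mp hvw with ⟨_, _⟩ | ⟨_, _⟩ <;> omega

lemma copMove_wall_succ (k : ℕ) :
    CopMove (pathGraph n □ pathGraph n) (wall n k) (wall n (k + 1)) := by
  intro ℓ
  by_cases hcap : ℓ.val + k < n - 1
  · refine .inr (grid_adj_iff.mpr (.inr ⟨.inl ?_, rfl⟩))
    simp only [wall]
    omega
  · refine .inl (Prod.ext rfl (Fin.ext ?_))
    simp only [wall]
    omega

theorem copsCatch_wall {k : ℕ} (hk : 1 ≤ k) {r : Fin n × Fin n} (hr : r.1.val + k < r.2.val) :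
    CopsCatch (pathGraph n □ pathGraph n) (wall n k) r := by
  refine .of_copsEnclose (copMove_wall_succ k) (copsEnclose_above_wall (by omega)) ?_
    fun r' hr' => copsCatch_wall (by omega) hr'
  exact mem_above_or_mem_range_wall (by omega) (by omega)
termination_by n - k
decreasing_by omega

lemma copMove_diagonalPairs_wall :
    CopMove (pathGraph n □ pathGraph n) (diagonalPairs n) (wall n 1) := by
  intro ℓ
  refine .inr (grid_adj_iff.mpr ?_)
  simp only [diagonalPairs, wall, pairVertex]
  rcases Nat.even_or_odd ℓ.val with ⟨t, ht⟩ | ⟨t, ht⟩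
  · exact .inl ⟨by omega, Fin.ext (by simp only; omega)⟩
  · exact .inr ⟨by omega, Fin.ext (by simp only; omega)⟩

lemma copsCatch_diagonalPairs_of_lt {r : Fin n × Fin n} (hr : r.1 < r.2) :
    CopsCatch (pathGraph n □ pathGraph n) (diagonalPairs n) r := by
  refine .of_copsEnclose copMove_diagonalPairs_wall (copsEnclose_above_wall le_rfl) ?_
    fun r' hr' => copsCatch_wall le_rfl hr'
  exact mem_above_or_mem_range_wall le_rfl hr

open Classical in
/-- The two pairs next to the diagonal vertex `(x, x)` spread out onto its neighbours. -/
noncomputable def surround (x : Fin n) (ℓ : Fin (n - 1)) : Fin n × Fin n :=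
  if (pathGraph n).Adj (pairVertex ℓ) x then
    if Even ℓ.val then (x, pairVertex ℓ) else (pairVertex ℓ, x)
  else diagonalPairs n ℓ

lemma copMove_surround (x : Fin n) :
    CopMove (pathGraph n □ pathGraph n) (diagonalPairs n) (surround x) := by
  intro ℓ
  unfold surround
  split_ifs with hadj
  · exact .inr (boxProd_adj.mpr (.inl ⟨hadj, rfl⟩))
  · exact .inr (boxProd_adj.mpr (.inr ⟨hadj, rfl⟩))
  · exact .inl rfl

lemma pairVertex_eq {ℓ : Fin (n - 1)} {d : Fin n} (hd : Odd d.val)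
    (hℓ : ℓ.val = d.val ∨ ℓ.val + 1 = d.val) : pairVertex ℓ = d := by
  obtain ⟨t, ht⟩ := hd
  exact Fin.ext (by simp only [pairVertex]; omega)

/-- The neighbours of an even diagonal vertex are odd, hence (as `n` is odd) carry a pair. -/
lemma mem_range_surround (hodd : Odd n) {x : Fin n} (hx : Even x.val) {w : Fin n × Fin n}
    (hw : (pathGraph n □ pathGraph n).Adj (x, x) w) : w ∈ Set.range (surround x) := by
  have hnbr : ∀ d : Fin n, (pathGraph n).Adj x d → Odd d.val ∧ d.val < n - 1 := by
    intro d hd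
    obtain ⟨m, hm⟩ := hodd
    obtain ⟨t, ht⟩ := hx
    have := pathGraph_adj.mp hd
    exact ⟨Nat.odd_iff.mpr (by omega), by omega⟩
  obtain ⟨w₁, w₂⟩ := w
  rcases boxProd_adj.mp hw with ⟨hadj, h₂ : x = w₂⟩ | ⟨hadj, h₁ : x = w₁⟩
  · subst w₂
    obtain ⟨hw₁, hlt⟩ := hnbr w₁ hadj
    have hpv : pairVertex ⟨w₁.val, hlt⟩ = w₁ := pairVertex_eq hw₁ (.inl rfl)
    refine ⟨⟨w₁.val, hlt⟩, ?_⟩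
    simp [surround, hpv, (hadj : (pathGraph n).Adj x w₁).symm, Nat.not_even_iff_odd.mpr hw₁]
  · subst w₁
    obtain ⟨hw₂, hlt⟩ := hnbr w₂ hadj
    have hpos : 0 < w₂.val := hw₂.pos
    have hpv : pairVertex ⟨w₂.val - 1, by omega⟩ = w₂ :=
      pairVertex_eq hw₂ (.inr (Nat.sub_add_cancel hpos))
    have hev : Even (w₂.val - 1) := by
      obtain ⟨t, ht⟩ := hw₂
      exact ⟨t, by omega⟩
    refine ⟨⟨w₂.val - 1, by omega⟩, ?_⟩
    simp [surround, hpv, (hadj : (pathGraph n).Adj x w₂).symm, hev]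

lemma copsCatch_diagonalPairs_diag (hodd : Odd n) (hn : 2 ≤ n) (x : Fin n) :
    CopsCatch (pathGraph n □ pathGraph n) (diagonalPairs n) (x, x) := by
  rcases Nat.even_or_odd x.val with hx | hx
  · have : Nontrivial (Fin n) := Fin.nontrivial_iff_two_le.mpr hn
    obtain ⟨y, hy⟩ := (pathGraph_preconnected n).exists_adj_of_nontrivial x
    exact .of_surround (w := (y, x)) (copMove_surround x)
      (fun _ hw => mem_range_surround hodd hx hw) (boxProd_adj.mpr (.inl ⟨hy, rfl⟩))
  · have hxlt : x.val < n - 1 := by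
      obtain ⟨m, hm⟩ := hodd
      obtain ⟨t, ht⟩ := hx
      omega
    have hpv := pairVertex_eq (ℓ := ⟨x.val, hxlt⟩) hx (.inl rfl)
    exact .of_mem_range ⟨⟨x.val, hxlt⟩, Prod.ext hpv hpv⟩

end SquareGrid

/-- For every odd `n ≥ 3`, the infinite-speed cop number of the
`n × n` grid `P_n □ P_n` is at most `n - 1`. -/
theorem infCopNumber_grid_le_of_odd (n : ℕ) (hodd : Odd n) (hn : 3 ≤ n) :
    infCopNumber (pathGraph n □ pathGraph n) ≤ n - 1 := by
  refine infCopNumber_le ⟨SquareGrid.diagonalPairs n, fun r => ?_⟩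
  rcases lt_trichotomy r.1 r.2 with hlt | heq | hgt
  · exact SquareGrid.copsCatch_diagonalPairs_of_lt hlt
  · obtain ⟨x, y⟩ := r
    obtain rfl : x = y := heq
    exact SquareGrid.copsCatch_diagonalPairs_diag hodd (by omega) x
  · exact (SquareGrid.copsCatch_diagonalPairs_of_lt (r := r.swap) hgt).map (boxProdComm _ _)
end

section
/- Let G be a finite simple graph and let H be a retract of G. Then the infinite-speed cop numbers satisfy c_∞(G) ≥ c_∞(H). -/
open SimpleGraph

variable {V : Type*}

/-!
Let the `k` cops of a winning strategy on `G` play on `H` through their shadows under the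
retraction `φ`. Shadows move legally because `φ` is a homomorphism. A robber confined to `H`
is also a robber in `G`, and an escape path in `H` avoiding the shadows avoids the real cops
too, since a cop standing on a vertex of `H` is its own shadow. So every robber move in `H`
answers a robber move in `G`, and the capture strategy on `G` projects to one on `H`.
-/

section Retraction

variable {W : Type*} {G : SimpleGraph V} {H : SimpleGraph W} {k : ℕ}

theorem CopMove.map (φ : G →g H) {c c' : Fin k → V} (h : CopMove G c c') :
    CopMove H (φ ∘ c) (φ ∘ c') := fun i =>
  (h i).imp (congrArg φ) φ.map_adj

theorem RobberMove.of_retraction (ι : H →g G) (φ : G →g H) (hφι : ∀ w, φ (ι w) = w)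
    {c : Fin k → V} {r r' : W} (h : RobberMove H (φ ∘ c) r r') :
    RobberMove G c (ι r) (ι r') := by
  obtain ⟨p, hp⟩ := h
  refine ⟨p.map ι, fun v hv i hcv => ?_⟩
  rw [Walk.support_map, List.mem_map] at hv
  obtain ⟨u, hu, rfl⟩ := hv
  exact hp u hu i (by simp [hcv, hφι])

theorem CopsCatch.of_retraction (ι : H →g G) (φ : G →g H) (hφι : ∀ w, φ (ι w) = w)
    {c : Fin k → V} {r : W} (h : CopsCatch G c (ι r)) : CopsCatch H (φ ∘ c) r := by
  generalize hx : ι r = x at h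
  induction h generalizing r with
  | step c x c' hmove _ ih =>
    subst hx
    exact .step _ _ _ (hmove.map φ) fun r' hr' =>
      ih _ (hr'.of_retraction ι φ hφι) rfl

theorem CopsWin.of_retraction (ι : H →g G) (φ : G →g H) (hφι : ∀ w, φ (ι w) = w)
    (h : CopsWin G k) : CopsWin H k := by
  obtain ⟨c₀, hc₀⟩ := h
  exact ⟨φ ∘ c₀, fun r₀ => (hc₀ (ι r₀)).of_retraction ι φ hφι⟩

end Retraction

/-- One cop on every vertex leaves the robber nowhere to start. -/
theorem copsWin_card [Fintype V] (G : SimpleGraph V) : CopsWin G (Fintype.card V) := by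
  refine ⟨(Fintype.equivFin V).symm, fun r₀ => .step _ _ _ (fun _ => Or.inl rfl) ?_⟩
  rintro r ⟨p, hp⟩
  exact absurd (by simp) (hp r p.end_mem_support (Fintype.equivFin V r))

theorem infCopNumber_le_infCopNumber {W : Type*} [Fintype V] {G : SimpleGraph V}
    {H : SimpleGraph W} (h : ∀ k, CopsWin G k → CopsWin H k) :
    infCopNumber H ≤ infCopNumber G :=
  csInf_le_csInf (OrderBot.bddBelow _) ⟨_, copsWin_card G⟩ h

/-- Let `G` be a finite simple graph and let `H` be a retract of `G`,
i.e. `H` is a subgraph of `G` (on a vertex set `s ⊆ V`) for which there is a graph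
homomorphism `φ : G → H` fixing every vertex of `H`.  Then `c_∞(G) ≥ c_∞(H)`. -/
theorem infCopNumber_le_of_retract {V : Type*} [Fintype V] (G : SimpleGraph V)
    (s : Set V) (H : SimpleGraph s)
    (hsub : ∀ u v : s, H.Adj u v → G.Adj u v)
    (φ : G →g H) (hφ : ∀ v : s, φ (v : V) = v) :
    infCopNumber H ≤ infCopNumber G :=
  let ι : H →g G := ⟨Subtype.val, hsub _ _⟩
  infCopNumber_le_infCopNumber fun _ => CopsWin.of_retraction ι φ hφ
end

section
/- For every real ε > 0 there is an N such that for every integer n ≥ N, the infinite-speed cop number of the n×n×n grid satisfies c_∞(P_n □ P_n □ P_n) ≤ (3/4 + ε)·n² (as real numbers); i.e., c_∞(P_n □ P_n □ P_n) ≤ (0.75 + o(1))n². -/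
open SimpleGraph

variable {V : Type*}

/-!
The cops sweep the cube level by level along the rank `x + y + z`: at time `t` every vertex
of rank `t` is occupied, and since the robber cannot cross an occupied level, he is confined
to ranks `> t` until the sweep reaches the top. Such a sweep is a cover of the cube by
monotone lattice paths, one cop running along each. The square `[0, m]²` is covered by
`m + 1` hooks, the `a`-th of which is a path with `2 (m - a) + 1` vertices; its product with
`[0, m]` is a grid again, covered by `min m (2 (m - a)) + 1` hooks. This uses
`∑ j ≤ m, (min m (2 j) + 1) ≤ (3 (m + 1)² + 1) / 4` cops, the size of the middle rank level.
-/

lemma SimpleGraph.Walk.lt_of_forall_ne {G : SimpleGraph V} {ρ : V → ℕ}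
    (hρ : ∀ u v, G.Adj u v → ρ u ≤ ρ v + 1) {m : ℕ} {u w : V} (p : G.Walk u w)
    (hp : ∀ v ∈ p.support, ρ v ≠ m) (hu : m < ρ u) : m < ρ w := by
  induction p with
  | nil => exact hu
  | @cons u v w huv p ih =>
    have hv : ρ v ≠ m := hp v (by simp)
    exact ih (fun x hx => hp x (by simp [hx])) (by have := hρ u v huv; omega)

theorem copsWin_of_sweep {ι : Type*} [Fintype ι] (G : SimpleGraph V) (ρ : V → ℕ) (B : ℕ)
    (hρ : ∀ u v, G.Adj u v → ρ u ≤ ρ v + 1) (hB : ∀ v, ρ v ≤ B)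
    (f : ℕ → ι → V) (hf : ∀ t i, f (t + 1) i = f t i ∨ G.Adj (f t i) (f (t + 1) i))
    (hcover : ∀ v, ∃ i, f (ρ v) i = v) :
    CopsWin G (Fintype.card ι) := by
  let c : ℕ → Fin (Fintype.card ι) → V := fun t i => f t ((Fintype.equivFin ι).symm i)
  have hcover' : ∀ v, ∃ i, c (ρ v) i = v := fun v => by
    obtain ⟨i, hi⟩ := hcover v
    exact ⟨Fintype.equivFin ι i, by simpa [c] using hi⟩
  suffices h : ∀ d t r, B < t + d → t ≤ ρ r → CopsCatch G (c t) r from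
    ⟨c 0, fun r => h (B + 1) 0 r (by omega) (Nat.zero_le _)⟩
  intro d
  induction d with
  | zero => intro t r hd hr; exact absurd (hB r) (by omega)
  | succ d ih =>
    intro t r hd hr
    rcases hr.eq_or_lt with hr | hr
    · -- the cops stay put, and the robber cannot leave his occupied vertex
      refine .step _ _ (c t) (fun i => Or.inl rfl) ?_
      rintro r' ⟨w, hw⟩
      obtain ⟨i, hi⟩ := hcover' r
      exact (hw r w.start_mem_support i (hr ▸ hi)).elim
    · refine .step _ _ (c (t + 1)) (fun i => hf t _) ?_
      rintro r' ⟨w, hw⟩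
      have hlevel : ∀ v ∈ w.support, ρ v ≠ t + 1 := fun v hv hvt => by
        obtain ⟨i, hi⟩ := hcover' v
        exact hw v hv i (hvt ▸ hi)
      have hr' := hlevel r w.start_mem_support
      exact ih (t + 1) r' (by omega) (w.lt_of_forall_ne hρ hlevel (by omega)).le

/-- The `b`-th hook of the grid `[0, A] × [0, B]`, parametrized by rank: it runs up the
column `x = b` and then along the row `y = B - b`, and is constant before and after. -/
def hook (A B b s : ℕ) : ℕ × ℕ :=
  (min (b + (s - B)) A, min (s - b) (B - b))

lemma hook_mono (A B b : ℕ) : Monotone (hook A B b) := fun s s' h => by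
  simp only [hook, Prod.mk_le_mk]
  omega

lemma hook_rank_le (A B b : ℕ) {s s' : ℕ} (h : s ≤ s') :
    (hook A B b s').1 + (hook A B b s').2 ≤ (hook A B b s).1 + (hook A B b s).2 + (s' - s) := by
  simp only [hook]
  omega

lemma hook_min_sub_add {A B x y : ℕ} (hx : x ≤ A) (hy : y ≤ B) :
    hook A B (min x (B - y)) (x + y) = (x, y) := by
  simp only [hook, Prod.mk.injEq]
  omega

/-- The path of cop `(a, b)` in the cube `[0, m]³`: the `b`-th hook of the grid formed by the
`a`-th hook of `[0, m]²` (with its `2 (m - a) + 1` vertices) and the `z`-axis `[0, m]`. -/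
def cubePath (m a b t : ℕ) : (ℕ × ℕ) × ℕ :=
  (hook m m a (a + (hook (2 * (m - a)) m b (t - a)).1), (hook (2 * (m - a)) m b (t - a)).2)

lemma cubePath_mono (m a b : ℕ) : Monotone (cubePath m a b) := fun t t' h => by
  have hpz := hook_mono (2 * (m - a)) m b (Nat.sub_le_sub_right h a)
  exact Prod.mk_le_mk.2 ⟨hook_mono m m a (Nat.add_le_add_left hpz.1 a), hpz.2⟩

lemma cubePath_rank_succ_le (m a b t : ℕ) :
    (cubePath m a b (t + 1)).1.1 + (cubePath m a b (t + 1)).1.2 + (cubePath m a b (t + 1)).2 ≤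
      (cubePath m a b t).1.1 + (cubePath m a b t).1.2 + (cubePath m a b t).2 + 1 := by
  have hpz := Prod.le_def.1 <|
    hook_mono (2 * (m - a)) m b (Nat.sub_le_sub_right (Nat.le_add_right t 1) a)
  have hpz' := hook_rank_le (2 * (m - a)) m b (Nat.sub_le_sub_right (Nat.le_add_right t 1) a)
  have hxy := hook_rank_le m m a (Nat.add_le_add_left hpz.1 a)
  simp only [cubePath]
  omega

lemma exists_cubePath_eq {m x y z : ℕ} (hx : x ≤ m) (hy : y ≤ m) (hz : z ≤ m) :
    ∃ a ≤ m, ∃ b ≤ min m (2 * (m - a)), cubePath m a b (x + y + z) = ((x, y), z) := by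
  set a := min x (m - y)
  have hp : x + y - a ≤ 2 * (m - a) := by omega
  refine ⟨a, by omega, min (x + y - a) (m - z), by omega, ?_⟩
  have hpz : hook (2 * (m - a)) m (min (x + y - a) (m - z)) (x + y + z - a) = (x + y - a, z) := by
    rw [show x + y + z - a = x + y - a + z by omega]
    exact hook_min_sub_add hp hz
  rw [cubePath, hpz, show a + (x + y - a) = x + y by omega, hook_min_sub_add hx hy]

abbrev cubeGraph (n : ℕ) : SimpleGraph ((Fin n × Fin n) × Fin n) :=
  boxProd (boxProd (pathGraph n) (pathGraph n)) (pathGraph n)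

def gridClamp (m : ℕ) (p : (ℕ × ℕ) × ℕ) : (Fin (m + 1) × Fin (m + 1)) × Fin (m + 1) :=
  ((Fin.clamp p.1.1 m, Fin.clamp p.1.2 m), Fin.clamp p.2 m)

lemma gridClamp_eq_or_adj {m : ℕ} {p q : (ℕ × ℕ) × ℕ} (hpq : p ≤ q)
    (hq : q.1.1 + q.1.2 + q.2 ≤ p.1.1 + p.1.2 + p.2 + 1) :
    gridClamp m q = gridClamp m p ∨
      (cubeGraph (m + 1)).Adj (gridClamp m p) (gridClamp m q) := by
  obtain ⟨⟨hx, hy⟩, hz⟩ := hpq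
  simp only [gridClamp, Fin.clamp, boxProd_adj, pathGraph_adj, Prod.mk.injEq, Fin.ext_iff]
  omega

lemma gridClamp_val {m : ℕ} (x y z : Fin (m + 1)) : gridClamp m ((x, y), z) = ((x, y), z) := by
  simp only [gridClamp, Fin.clamp]
  ext <;> simp only <;> omega

/-- Cop `⟨a, b⟩` runs along `cubePath m a b`; `b` ranges over the hooks of the grid
`[0, 2 (m - a)] × [0, m]`. -/
def cubeCops (m : ℕ) : Finset (Σ _ : ℕ, ℕ) :=
  (Finset.range (m + 1)).sigma fun a => Finset.range (min m (2 * (m - a)) + 1)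

theorem copsWin_cubeGraph (m : ℕ) : CopsWin (cubeGraph (m + 1)) (cubeCops m).card := by
  rw [← Fintype.card_coe]
  refine copsWin_of_sweep _ (fun v => v.1.1 + v.1.2 + v.2) (3 * m) ?_ ?_
    (fun t i => gridClamp m (cubePath m i.1.1 i.1.2 t)) ?_ ?_
  · intro u v huv
    simp only [boxProd_adj, pathGraph_adj, Prod.ext_iff, Fin.ext_iff] at huv
    omega
  · intro v
    have := v.1.1.isLt; have := v.1.2.isLt; have := v.2.isLt
    omega
  · intro t i
    exact gridClamp_eq_or_adj (cubePath_mono m _ _ (Nat.le_add_right t 1))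
      (cubePath_rank_succ_le m _ _ t)
  · rintro ⟨⟨x, y⟩, z⟩
    obtain ⟨a, ha, b, hb, hab⟩ := exists_cubePath_eq (Nat.le_of_lt_succ x.isLt)
      (Nat.le_of_lt_succ y.isLt) (Nat.le_of_lt_succ z.isLt)
    refine ⟨⟨⟨a, b⟩, ?_⟩, ?_⟩
    · simp only [cubeCops, Finset.mem_sigma, Finset.mem_range]
      omega
    · rw [hab, gridClamp_val]

lemma sum_range_two_mul_add_one (h : ℕ) : ∑ j ∈ Finset.range h, (2 * j + 1) = h ^ 2 := by
  induction h with
  | zero => rfl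
  | succ h ih => rw [Finset.sum_range_succ, ih]; ring

lemma four_mul_sum_range_min_le (n : ℕ) :
    4 * ∑ j ∈ Finset.range n, min n (2 * j + 1) ≤ 3 * n ^ 2 + 1 := by
  set h := n / 2
  have hsplit : ∑ j ∈ Finset.range h, min n (2 * j + 1) +
      ∑ j ∈ Finset.Ico h n, min n (2 * j + 1) = ∑ j ∈ Finset.range n, min n (2 * j + 1) :=
    Finset.sum_range_add_sum_Ico _ (Nat.div_le_self n 2)
  have hlow : ∑ j ∈ Finset.range h, min n (2 * j + 1) ≤ h ^ 2 :=
    sum_range_two_mul_add_one h ▸ Finset.sum_le_sum fun j _ => min_le_right _ _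
  have hhigh : ∑ j ∈ Finset.Ico h n, min n (2 * j + 1) ≤ (n - h) * n := by
    simpa using Finset.sum_le_sum fun j (_ : j ∈ Finset.Ico h n) => min_le_left n (2 * j + 1)
  have key : 4 * (h ^ 2 + (n - h) * n) ≤ 3 * n ^ 2 + 1 := by
    obtain ⟨c, hc | hc⟩ := Nat.even_or_odd' n
    · rw [show h = c by omega, show n - c = c by omega, hc]; nlinarith
    · rw [show h = c by omega, show n - c = c + 1 by omega, hc]; nlinarith
  omega

lemma card_cubeCops (m : ℕ) :
    (cubeCops m).card = ∑ j ∈ Finset.range (m + 1), min (m + 1) (2 * j + 1) := by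
  rw [cubeCops, Finset.card_sigma, ← Finset.sum_range_reflect]
  refine Finset.sum_congr rfl fun j hj => ?_
  simp only [Finset.card_range, Finset.mem_range] at hj ⊢
  omega

/-- For every `ε > 0` there is an `N` such that for all `n ≥ N`,
`c_∞(P_n □ P_n □ P_n) ≤ (3/4 + ε) n²`; that is,
`c_∞(P_n □ P_n □ P_n) ≤ (0.75 + o(1)) n²`. -/
theorem infCopNumber_grid3_upper (ε : ℝ) (hε : 0 < ε) :
    ∃ N : ℕ, ∀ n : ℕ, N ≤ n →
      (infCopNumber (boxProd (boxProd (pathGraph n) (pathGraph n)) (pathGraph n)) : ℝ) ≤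
        (3 / 4 + ε) * (n : ℝ) ^ 2 := by
  obtain ⟨N, hN⟩ := exists_nat_gt ε⁻¹
  refine ⟨N + 1, fun n hn => ?_⟩
  obtain ⟨m, rfl⟩ : ∃ m, n = m + 1 := ⟨n - 1, by omega⟩
  have hcops : (infCopNumber (cubeGraph (m + 1)) : ℝ) ≤ (cubeCops m).card := by
    exact_mod_cast Nat.sInf_le (copsWin_cubeGraph m)
  have hcard : (4 * (cubeCops m).card : ℝ) ≤ 3 * (m + 1 : ℕ) ^ 2 + 1 := by
    rw [card_cubeCops]
    exact_mod_cast four_mul_sum_range_min_le (m + 1)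
  have hεn : 1 ≤ ε * (m + 1 : ℕ) := by
    rw [← inv_mul_le_iff₀ hε, mul_one]
    exact hN.le.trans (by exact_mod_cast N.le_succ.trans hn)
  have hn1 : (1 : ℝ) ≤ (m + 1 : ℕ) := by simp
  nlinarith
end

section
/- Fix a real number c with 1/2 ≤ c ≤ 1, and for each even integer n ≥ 6 let m = ⌊c(n−1)⌋. Then, as n → ∞ through even integers, C_m(n/2−1, n/2−1, n)/n² → −c²/2 + c − 1/4 and S_m(n/2−1, n/2−1, n)/n³ → −c³/6 + c²/2 − c/4 + 1/24. -/
open Filter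

/-- `C_m(a,b,c)`: the number of triples `(x, y, z)` with `0 ≤ x ≤ a - 1`,
`0 ≤ y ≤ b - 1`, `0 ≤ z ≤ c - 1`, and `x + y + z = m`. -/
def C3 (a b c m : ℕ) : ℕ :=
  Fintype.card {p : Fin a × Fin b × Fin c // (p.1 : ℕ) + (p.2.1 : ℕ) + (p.2.2 : ℕ) = m}

/-- `S_m(a,b,c)`: the number of triples `(x, y, z)` with `0 ≤ x ≤ a - 1`,
`0 ≤ y ≤ b - 1`, `0 ≤ z ≤ c - 1`, and `x + y + z ≤ m`. -/
def S3 (a b c m : ℕ) : ℕ :=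
  Fintype.card {p : Fin a × Fin b × Fin c // (p.1 : ℕ) + (p.2.1 : ℕ) + (p.2.2 : ℕ) ≤ m}

/-!
Since `m < n`, the bound on the third coordinate never binds, so `C_m` counts the pairs
`x, y < s` with `x + y ≤ m`, and `S_m = ∑_{k ≤ m} C_k`. Inclusion–exclusion over the two
constraints `x < s`, `y < s` writes these counts as alternating sums of binomial coefficients
`(m + r - ·).choose r` with `r = 2, 3`. Along the sequence, `s ~ n/2` and `m ~ c n`, and
`(α n).choose r ~ (α n)^r / r!`; since `1/2 ≤ c ≤ 1`, the terms for `x ≥ s` and for `y ≥ s`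
are `~ ((c - 1/2) n)^r / r!`, while the term for `x, y ≥ s` stays bounded.
-/

open Finset

/-- Inclusion–exclusion count of the tuples `(x, y, z₁, …, z_{r-1}) ∈ ℕ^(r+1)` with sum `m` and
`x < a`, `y < b`; the truncated subtraction of `ℕ` makes the terms of empty constraints vanish. -/
def boundedCompositionCount (r a b m : ℕ) : ℤ :=
  (m + r).choose r - (m + r - a).choose r - (m + r - b).choose r + (m + r - a - b).choose r

theorem sum_range_choose_add_tsub (N r a : ℕ) :
    ∑ k ∈ range N, (k + r + 1 - a).choose (r + 1) = (N + r + 1 - a).choose (r + 2) := by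
  induction N with
  | zero => exact (Nat.choose_eq_zero_of_lt (by omega)).symm
  | succ N ih =>
    rw [sum_range_succ, ih]
    rcases le_or_gt a (N + r + 1) with h | h
    · rw [show N + 1 + r + 1 - a = N + r + 1 - a + 1 by omega, Nat.choose_succ_succ' _ (r + 1),
        add_comm]
    · rw [Nat.choose_eq_zero_of_lt (n := N + r + 1 - a) (k := r + 2) (by omega),
        Nat.choose_eq_zero_of_lt (n := N + r + 1 - a) (k := r + 1) (by omega),
        Nat.choose_eq_zero_of_lt (by omega)]

theorem sum_range_boundedCompositionCount (r a b m : ℕ) :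
    ∑ k ∈ range (m + 1), boundedCompositionCount (r + 1) a b k =
      boundedCompositionCount (r + 2) a b m := by
  have hockey (a : ℕ) : ∑ k ∈ range (m + 1), ((k + (r + 1) - a).choose (r + 1) : ℤ) =
      (m + (r + 2) - a).choose (r + 2) := by
    rw [show m + (r + 2) - a = m + 1 + r + 1 - a by omega, ← sum_range_choose_add_tsub]
    push_cast
    rfl
  have hockey₀ := hockey 0
  simp only [Nat.sub_zero] at hockey₀
  simp only [boundedCompositionCount, sum_add_distrib, sum_sub_distrib, Nat.sub_sub]
  rw [hockey₀, hockey, hockey, hockey]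

theorem card_filter_le_eq_sum_card_filter_eq {α : Type*} (s : Finset α) (f : α → ℕ) (m : ℕ) :
    #{x ∈ s | f x ≤ m} = ∑ k ∈ range (m + 1), #{x ∈ s | f x = k} := by
  rw [card_eq_sum_card_fiberwise (f := f) (t := range (m + 1))]
  · simp only [filter_filter]
    refine sum_congr rfl fun k hk => congrArg card (filter_congr fun x _ => ?_)
    have := mem_range.1 hk
    exact ⟨And.right, fun h => ⟨by omega, h⟩⟩
  · intro x hx
    simp only [coe_filter, Set.mem_ofPred_eq, coe_range, Set.mem_Iio] at hx ⊢
    omega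

theorem card_filter_fst_add_snd_eq (a b k : ℕ) :
    #{p ∈ range a ×ˢ range b | p.1 + p.2 = k} = boundedCompositionCount 1 a b k := by
  have hfst : #{p ∈ range a ×ˢ range b | p.1 + p.2 = k} = #(Ico (k + 1 - b) (min a (k + 1))) := by
    refine card_nbij Prod.fst ?_ ?_ ?_
    · intro p hp
      simp only [coe_filter, mem_product, mem_range, Set.mem_ofPred_eq, coe_Ico,
        Set.mem_Ico] at hp ⊢
      omega
    · intro p hp q hq hpq
      simp only [coe_filter, mem_product, mem_range, Set.mem_ofPred_eq] at hp hq
      ext <;> omega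
    · intro x hx
      simp only [coe_Ico, Set.mem_Ico] at hx
      refine ⟨(x, k - x), ?_, rfl⟩
      simp only [coe_filter, mem_product, mem_range, Set.mem_ofPred_eq]
      omega
  rw [hfst, Nat.card_Ico, boundedCompositionCount]
  simp only [Nat.choose_one_right]
  omega

theorem card_fin_triple_subtype (a b c : ℕ) (P : ℕ × ℕ × ℕ → Prop) [DecidablePred P] :
    Fintype.card {p : Fin a × Fin b × Fin c // P (p.1, p.2.1, p.2.2)} =
      #{q ∈ range a ×ˢ range b ×ˢ range c | P q} := by
  rw [Fintype.card_subtype]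
  refine card_nbij (fun p => ((p.1 : ℕ), (p.2.1 : ℕ), (p.2.2 : ℕ))) ?_ ?_ ?_
  · intro p hp
    simp only [coe_filter, mem_univ, true_and, Set.mem_ofPred_eq, mem_product, mem_range] at hp ⊢
    exact ⟨⟨p.1.isLt, p.2.1.isLt, p.2.2.isLt⟩, hp⟩
  · intro p _ q _ h
    simp only [Prod.mk.injEq, Fin.val_inj] at h
    ext <;> simp [h]
  · intro q hq
    simp only [coe_filter, Set.mem_ofPred_eq, mem_product, mem_range] at hq
    exact ⟨(⟨q.1, hq.1.1⟩, ⟨q.2.1, hq.1.2.1⟩, ⟨q.2.2, hq.1.2.2⟩), by simpa using hq.2, rfl⟩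

theorem C3_eq_card_filter_add_le {a b c m : ℕ} (hm : m < c) :
    C3 a b c m = #{p ∈ range a ×ˢ range b | p.1 + p.2 ≤ m} := by
  rw [C3, card_fin_triple_subtype a b c (fun q => q.1 + q.2.1 + q.2.2 = m)]
  refine card_nbij (fun q => (q.1, q.2.1)) ?_ ?_ ?_
  · intro q hq
    simp only [coe_filter, mem_product, mem_range, Set.mem_ofPred_eq] at hq ⊢
    omega
  · intro q hq q' hq' h
    simp only [coe_filter, mem_product, mem_range, Set.mem_ofPred_eq, Prod.mk.injEq] at hq hq' h
    ext <;> omega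
  · intro p hp
    simp only [coe_filter, mem_product, mem_range, Set.mem_ofPred_eq] at hp
    refine ⟨(p.1, p.2, m - (p.1 + p.2)), ?_, rfl⟩
    simp only [coe_filter, mem_product, mem_range, Set.mem_ofPred_eq]
    omega

theorem S3_eq_sum_C3 (a b c m : ℕ) : S3 a b c m = ∑ k ∈ range (m + 1), C3 a b c k := by
  rw [S3, card_fin_triple_subtype a b c (fun q => q.1 + q.2.1 + q.2.2 ≤ m),
    card_filter_le_eq_sum_card_filter_eq]
  exact sum_congr rfl fun k _ => (card_fin_triple_subtype a b c _).symm

theorem C3_eq_boundedCompositionCount {a b c m : ℕ} (hm : m < c) :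
    (C3 a b c m : ℤ) = boundedCompositionCount 2 a b m := by
  rw [C3_eq_card_filter_add_le hm, card_filter_le_eq_sum_card_filter_eq, Nat.cast_sum]
  simp only [card_filter_fst_add_snd_eq]
  exact sum_range_boundedCompositionCount 0 a b m

theorem S3_eq_boundedCompositionCount {a b c m : ℕ} (hm : m < c) :
    (S3 a b c m : ℤ) = boundedCompositionCount 3 a b m := by
  rw [S3_eq_sum_C3, Nat.cast_sum, ← sum_range_boundedCompositionCount 1]
  exact sum_congr rfl fun k hk => C3_eq_boundedCompositionCount (by grind)

open Topology
open scoped Nat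

theorem natCast_tsub_eq_max {R : Type*} [Ring R] [LinearOrder R] [IsStrictOrderedRing R]
    (x y : ℕ) : ((x - y : ℕ) : R) = max ((x : R) - y) 0 := by
  rcases le_total y x with h | h
  · rw [Nat.cast_sub h, max_eq_left (sub_nonneg.2 (by exact_mod_cast h))]
  · rw [Nat.sub_eq_zero_of_le h, Nat.cast_zero, max_eq_right (sub_nonpos.2 (by exact_mod_cast h))]

namespace Filter.Tendsto

variable {x y : ℕ → ℕ} {α β : ℝ}

theorem natCast_tsub_div (hx : Tendsto (fun t => (x t : ℝ) / t) atTop (𝓝 α))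
    (hy : Tendsto (fun t => (y t : ℝ) / t) atTop (𝓝 β)) :
    Tendsto (fun t => ((x t - y t : ℕ) : ℝ) / t) atTop (𝓝 (max (α - β) 0)) := by
  refine ((hx.sub hy).max tendsto_const_nhds).congr fun t => ?_
  rw [natCast_tsub_eq_max, ← max_div_div_right (Nat.cast_nonneg t), zero_div, sub_div]

theorem natCast_add_const_div (hx : Tendsto (fun t => (x t : ℝ) / t) atTop (𝓝 α)) (k : ℕ) :
    Tendsto (fun t => ((x t + k : ℕ) : ℝ) / t) atTop (𝓝 α) := by
  simpa [add_div] using hx.add (tendsto_const_div_atTop_nhds_zero_nat (k : ℝ))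

theorem natCast_choose_div_pow (hx : Tendsto (fun t => (x t : ℝ) / t) atTop (𝓝 α)) (r : ℕ) :
    Tendsto (fun t => ((x t).choose r : ℝ) / t ^ r) atTop (𝓝 (α ^ r / r !)) := by
  have hfactor (j : ℕ) : Tendsto (fun t => ((x t : ℝ) - j) / t) atTop (𝓝 α) := by
    simpa [sub_div] using hx.sub (tendsto_const_div_atTop_nhds_zero_nat (j : ℝ))
  have := (tendsto_finsetProd (range r) fun j _ => hfactor j).div_const (r ! : ℝ)
  rw [prod_const, card_range] at this
  refine this.congr fun t => ?_
  rw [Nat.cast_choose_eq_descPochhammer_div, descPochhammer_eval_eq_prod_range, prod_div_distrib,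
    prod_const, card_range, div_right_comm]

end Filter.Tendsto

theorem tendsto_boundedCompositionCount_div_pow {a b m : ℕ → ℕ} {α β μ : ℝ}
    (ha : Tendsto (fun t => (a t : ℝ) / t) atTop (𝓝 α))
    (hb : Tendsto (fun t => (b t : ℝ) / t) atTop (𝓝 β))
    (hm : Tendsto (fun t => (m t : ℝ) / t) atTop (𝓝 μ)) (r : ℕ) :
    Tendsto (fun t => (boundedCompositionCount r (a t) (b t) (m t) : ℝ) / t ^ r) atTop
      (𝓝 ((μ ^ r - max (μ - α) 0 ^ r - max (μ - β) 0 ^ r + max (max (μ - α) 0 - β) 0 ^ r) /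
        r !)) := by
  have hmr := hm.natCast_add_const_div r
  have hma := hmr.natCast_tsub_div ha
  have := (((hmr.natCast_choose_div_pow r).sub (hma.natCast_choose_div_pow r)).sub
    ((hmr.natCast_tsub_div hb).natCast_choose_div_pow r)).add
    ((hma.natCast_tsub_div hb).natCast_choose_div_pow r)
  convert this using 2 with t
  · simp only [boundedCompositionCount]
    push_cast
    ring
  · ring

theorem tendsto_natFloor_mul_two_mul_sub_one_div {c : ℝ} (hc : 0 ≤ c) :
    Tendsto (fun t : ℕ => (⌊c * (2 * t - 1)⌋₊ : ℝ) / t) atTop (𝓝 (2 * c)) := by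
  have hu : Tendsto (fun t : ℕ => (2 * t - 1 : ℝ)) atTop atTop :=
    tendsto_atTop_add_const_right _ _ (tendsto_natCast_atTop_atTop.const_mul_atTop two_pos)
  have hdiv : Tendsto (fun t : ℕ => (2 * t - 1 : ℝ) / t) atTop (𝓝 2) := by
    have := (tendsto_const_nhds (x := (2 : ℝ))).sub (tendsto_const_div_atTop_nhds_zero_nat (1 : ℝ))
    rw [sub_zero] at this
    refine this.congr' ?_
    filter_upwards [eventually_ne_atTop 0] with t ht
    field_simp
  rw [mul_comm]
  refine (((tendsto_nat_floor_mul_div_atTop hc).comp hu).mul hdiv).congr' ?_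
  filter_upwards [eventually_ge_atTop 1] with t ht
  have : (1 : ℝ) ≤ t := by exact_mod_cast ht
  exact div_mul_div_cancel₀ (by linarith)

theorem natFloor_mul_two_mul_sub_one_lt {c : ℝ} (hc : c ≤ 1) {t : ℕ} (ht : 1 ≤ t) :
    ⌊c * ((2 * t : ℝ) - 1)⌋₊ < 2 * t := by
  have : (1 : ℝ) ≤ t := by exact_mod_cast ht
  refine (Nat.floor_lt' (by omega)).2 ?_
  push_cast
  nlinarith

theorem tendsto_natCast_sub_one_div : Tendsto (fun t : ℕ => ((t - 1 : ℕ) : ℝ) / t) atTop (𝓝 1) := by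
  have hid : Tendsto (fun t : ℕ => (t : ℝ) / t) atTop (𝓝 1) :=
    tendsto_const_nhds.congr' <| by
      filter_upwards [eventually_ne_atTop 0] with t ht
      field_simp
  simpa using hid.natCast_tsub_div (tendsto_const_div_atTop_nhds_zero_nat ((1 : ℕ) : ℝ))

/-- Fix a real `c` with `1/2 ≤ c ≤ 1` and, for each even `n = 2t`,
let `m = ⌊c(n-1)⌋`.  Then, as `n → ∞` through even integers,
`C_m(n/2-1, n/2-1, n)/n² → -c²/2 + c - 1/4` and
`S_m(n/2-1, n/2-1, n)/n³ → -c³/6 + c²/2 - c/4 + 1/24`. -/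
theorem slice_counts_quadrant (c : ℝ) (hc0 : 1 / 2 ≤ c) (hc1 : c ≤ 1) :
    Tendsto
      (fun t : ℕ => (C3 (t - 1) (t - 1) (2 * t) ⌊c * ((2 * t : ℝ) - 1)⌋₊ : ℝ) /
        (2 * t : ℝ) ^ 2) atTop (nhds (-c ^ 2 / 2 + c - 1 / 4)) ∧
    Tendsto
      (fun t : ℕ => (S3 (t - 1) (t - 1) (2 * t) ⌊c * ((2 * t : ℝ) - 1)⌋₊ : ℝ) /
        (2 * t : ℝ) ^ 3) atTop
      (nhds (-c ^ 3 / 6 + c ^ 2 / 2 - c / 4 + 1 / 24)) := by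
  have hm := tendsto_natFloor_mul_two_mul_sub_one_div (by linarith : 0 ≤ c)
  have hlt : ∀ᶠ t : ℕ in atTop, ⌊c * ((2 * t : ℝ) - 1)⌋₊ < 2 * t :=
    eventually_atTop.2 ⟨1, fun _ => natFloor_mul_two_mul_sub_one_lt hc1⟩
  have hs := tendsto_natCast_sub_one_div
  have hC := tendsto_boundedCompositionCount_div_pow hs hs hm 2
  have hS := tendsto_boundedCompositionCount_div_pow hs hs hm 3
  rw [max_eq_left (by linarith : (0 : ℝ) ≤ 2 * c - 1),
    max_eq_right (by linarith : 2 * c - 1 - 1 ≤ (0 : ℝ))] at hC hS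
  constructor
  · convert (hC.div_const 4).congr' ?_ using 2
    · norm_num [Nat.factorial]
      ring
    · filter_upwards [hlt] with t ht
      rw [← C3_eq_boundedCompositionCount ht, Int.cast_natCast]
      ring
  · convert (hS.div_const 8).congr' ?_ using 2
    · norm_num [Nat.factorial]
      ring
    · filter_upwards [hlt] with t ht
      rw [← S3_eq_boundedCompositionCount ht, Int.cast_natCast]
      ring
end

section
/- Fix a real number c with 1/2 ≤ c ≤ 1, and for each even integer n ≥ 6 let m = ⌊c(n−1)⌋. Then, as n → ∞ through even integers, C_m(n/2−1, n, n)/n² → c/2 − 1/8 and S_m(n/2−1, n, n)/n³ → c²/4 − c/8 + 1/48. -/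
/-!
When `m < b` and `m < c`, the upper bounds on `y` and `z` never bind, so counting `z` and then
`y` gives `C_m(a,b,c) = ∑_{x<a} (m+1-x)` and `2 S_m(a,b,c) = ∑_{x<a} (m+1-x)(m+2-x)`.
For `a ≤ m + 1` these are the polynomials `2C = a(2m+3) - a²` and
`6S = (m+1)(m+2)(m+3) - (m+1-a)(m+2-a)(m+3-a)`. With `n = 2t`, `a = t - 1` and
`m = ⌊c(n-1)⌋`, both constraints hold for `1/2 ≤ c ≤ 1`, and `m/t → 2c` gives the limits.
-/

open Filter

open Finset

theorem card_fin_triple_subtype_eq_sum (a b c : ℕ) (p : ℕ → Prop) [DecidablePred p] :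
    Fintype.card {q : Fin a × Fin b × Fin c // p (q.1 + q.2.1 + q.2.2)} =
      ∑ x ∈ range a, ∑ y ∈ range b, #{z ∈ range c | p (x + y + z)} := by
  simp only [Fintype.card_subtype, card_filter, Fintype.sum_prod_type]
  simp only [← Fin.sum_univ_eq_sum_range]

theorem card_filter_range_add_le {n m : ℕ} (w : ℕ) (h : m < n) :
    #{z ∈ range n | w + z ≤ m} = m + 1 - w := by
  rw [← card_range (m + 1 - w)]
  congr 1
  ext z
  simp only [mem_filter, mem_range]
  omega

theorem card_filter_range_add_eq {n m : ℕ} (w : ℕ) (h : m < n) :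
    #{z ∈ range n | w + z = m} = if w ≤ m then 1 else 0 := by
  split_ifs with hw
  · rw [card_eq_one]
    refine ⟨m - w, ?_⟩
    ext z
    simp only [mem_filter, mem_range, mem_singleton]
    omega
  · rw [card_eq_zero, filter_eq_empty_iff]
    intro z _
    omega

theorem two_mul_sum_range_tsub_of_le {n k : ℕ} (h : k ≤ n) :
    2 * ∑ y ∈ range n, (k - y) = k * (k + 1) := by
  have hzero : ∀ y ∈ range (n + 1), y ∉ range (k + 1) → k - y = 0 := fun y _ hy => by
    rw [mem_range] at hy; omega
  -- append the vanishing term `k - n`, then drop the vanishing terms beyond `k`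
  rw [← add_zero (∑ y ∈ range n, (k - y)), ← Nat.sub_eq_zero_of_le h, ← sum_range_succ,
    ← sum_subset (range_subset_range.2 (by omega : k + 1 ≤ n + 1)) hzero]
  have := sum_range_reflect id (k + 1)
  simp only [id, add_tsub_cancel_right] at this
  rw [this, mul_comm, sum_range_id_mul_two, add_tsub_cancel_right, mul_comm]

-- Terms with `x > m` vanish by truncated subtraction, so no bound on `a` is needed.
theorem C3_eq_sum_range {a b c m : ℕ} (hb : m < b) (hc : m < c) :
    C3 a b c m = ∑ x ∈ range a, (m + 1 - x) := by
  rw [C3, card_fin_triple_subtype_eq_sum a b c (· = m)]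
  refine sum_congr rfl fun x _ => ?_
  simp only [card_filter_range_add_eq _ hc, ← card_filter_range_add_le x hb, card_filter]

theorem S3_eq_sum_range {a b c m : ℕ} (hb : m < b) (hc : m < c) :
    2 * S3 a b c m = ∑ x ∈ range a, (m + 1 - x) * (m + 1 - x + 1) := by
  rw [S3, card_fin_triple_subtype_eq_sum a b c (· ≤ m), mul_sum]
  refine sum_congr rfl fun x _ => ?_
  simp only [card_filter_range_add_le _ hc, Nat.sub_add_eq]
  exact two_mul_sum_range_tsub_of_le (by omega)

section ClosedForms

variable {R : Type*} [CommRing R]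

theorem two_mul_sum_range_cast_tsub {a m : ℕ} (h : a ≤ m + 1) :
    (2 : R) * ∑ x ∈ range a, ((m + 1 - x : ℕ) : R) = a * (2 * m + 3) - a ^ 2 := by
  induction a with
  | zero => simp
  | succ a ih =>
    rw [sum_range_succ, mul_add, ih (by omega), Nat.cast_sub (by omega)]
    push_cast
    ring

theorem three_mul_sum_range_cast_tsub_mul_succ {a m : ℕ} (h : a ≤ m + 1) :
    (3 : R) * ∑ x ∈ range a, (((m + 1 - x) * (m + 1 - x + 1) : ℕ) : R) =
      (m + 1) * (m + 2) * (m + 3) - (m + 1 - a) * (m + 2 - a) * (m + 3 - a) := by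
  induction a with
  | zero => simp
  | succ a ih =>
    rw [sum_range_succ, mul_add, ih (by omega), Nat.cast_mul, Nat.cast_succ,
      Nat.cast_sub (by omega)]
    push_cast
    ring

theorem two_mul_C3 {a b c m : ℕ} (ha : a ≤ m + 1) (hb : m < b) (hc : m < c) :
    (2 : R) * C3 a b c m = a * (2 * m + 3) - a ^ 2 := by
  rw [C3_eq_sum_range hb hc, Nat.cast_sum, two_mul_sum_range_cast_tsub ha]

theorem six_mul_S3 {a b c m : ℕ} (ha : a ≤ m + 1) (hb : m < b) (hc : m < c) :
    (6 : R) * S3 a b c m =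
      (m + 1) * (m + 2) * (m + 3) - (m + 1 - a) * (m + 2 - a) * (m + 3 - a) := by
  rw [← three_mul_sum_range_cast_tsub_mul_succ ha, ← Nat.cast_sum, ← S3_eq_sum_range hb hc]
  push_cast
  ring

end ClosedForms

theorem C3_half_div_sq_eq {t m : ℕ} (ht : 1 ≤ t) (hm₁ : t - 1 ≤ m + 1) (hm₂ : m < 2 * t) :
    (C3 (t - 1) (2 * t) (2 * t) m : ℝ) / (2 * t : ℝ) ^ 2 =
      ((1 - 1 / t) * (2 * (m / t) + 3 * (1 / t)) - (1 - 1 / t) ^ 2) / 8 := by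
  have h := two_mul_C3 (R := ℝ) hm₁ hm₂ hm₂
  rw [Nat.cast_sub ht] at h
  push_cast at h
  rw [div_eq_iff (by positivity)]
  field_simp
  linear_combination (4 : ℝ) * h

theorem S3_half_div_cube_eq {t m : ℕ} (ht : 1 ≤ t) (hm₁ : t - 1 ≤ m + 1) (hm₂ : m < 2 * t) :
    (S3 (t - 1) (2 * t) (2 * t) m : ℝ) / (2 * t : ℝ) ^ 3 =
      ((m / t + 1 / t) * (m / t + 2 * (1 / t)) * (m / t + 3 * (1 / t)) -
        (m / t - 1 + 2 * (1 / t)) * (m / t - 1 + 3 * (1 / t)) * (m / t - 1 + 4 * (1 / t))) /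
        48 := by
  have h := six_mul_S3 (R := ℝ) hm₁ hm₂ hm₂
  rw [Nat.cast_sub ht] at h
  push_cast at h
  rw [div_eq_iff (by positivity)]
  field_simp
  linear_combination (8 : ℝ) * h

section FloorSequence

variable {c : ℝ} {t : ℕ}

theorem sub_one_le_floor_mul_two_mul_sub_one (hc : 1 / 2 ≤ c) (ht : 1 ≤ t) :
    t - 1 ≤ ⌊c * ((2 * t : ℝ) - 1)⌋₊ := by
  have ht' : (1 : ℝ) ≤ t := by exact_mod_cast ht
  refine Nat.le_floor ?_
  rw [Nat.cast_sub ht, Nat.cast_one]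
  nlinarith

theorem floor_mul_two_mul_sub_one_lt (hc : c ≤ 1) (ht : 1 ≤ t) :
    ⌊c * ((2 * t : ℝ) - 1)⌋₊ < 2 * t := by
  have ht' : (1 : ℝ) ≤ t := by exact_mod_cast ht
  rw [Nat.floor_lt' (by omega)]
  push_cast
  nlinarith

theorem tendsto_floor_mul_two_mul_sub_one_div (hc : 0 ≤ c) :
    Tendsto (fun t : ℕ => (⌊c * ((2 * t : ℝ) - 1)⌋₊ : ℝ) / t) atTop (nhds (2 * c)) := by
  have hy : Tendsto (fun t : ℕ => (2 * t : ℝ) - 1) atTop atTop :=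
    tendsto_atTop_add_const_right _ _ (tendsto_natCast_atTop_atTop.const_mul_atTop two_pos)
  have hratio : Tendsto (fun t : ℕ => ((2 * t : ℝ) - 1) / t) atTop (nhds 2) := by
    have := (tendsto_const_nhds (x := (2 : ℝ))).sub tendsto_one_div_atTop_nhds_zero_nat
    rw [sub_zero] at this
    refine this.congr' (eventually_atTop.2 ⟨1, fun t ht => ?_⟩)
    field_simp
  have := ((tendsto_nat_floor_mul_div_atTop hc).comp hy).mul hratio
  rw [mul_comm c] at this
  refine this.congr' (eventually_atTop.2 ⟨1, fun t ht => ?_⟩)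
  have : (2 * t : ℝ) - 1 ≠ 0 := by
    have : (1 : ℝ) ≤ t := by exact_mod_cast ht
    linarith
  simp only [Function.comp, div_mul_div_cancel₀ this]

end FloorSequence

/-- Fix a real `c` with `1/2 ≤ c ≤ 1` and, for each even `n = 2t`,
let `m = ⌊c(n-1)⌋`.  Then, as `n → ∞` through even integers,
`C_m(n/2-1, n, n)/n² → c/2 - 1/8` and `S_m(n/2-1, n, n)/n³ → c²/4 - c/8 + 1/48`. -/
theorem slice_counts_half (c : ℝ) (hc0 : 1 / 2 ≤ c) (hc1 : c ≤ 1) :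
    Tendsto
      (fun t : ℕ => (C3 (t - 1) (2 * t) (2 * t) ⌊c * ((2 * t : ℝ) - 1)⌋₊ : ℝ) /
        (2 * t : ℝ) ^ 2) atTop (nhds (c / 2 - 1 / 8)) ∧
    Tendsto
      (fun t : ℕ => (S3 (t - 1) (2 * t) (2 * t) ⌊c * ((2 * t : ℝ) - 1)⌋₊ : ℝ) /
        (2 * t : ℝ) ^ 3) atTop (nhds (c ^ 2 / 4 - c / 8 + 1 / 48)) := by
  set m : ℕ → ℕ := fun t => ⌊c * ((2 * t : ℝ) - 1)⌋₊
  have hm₁ (t : ℕ) (ht : 1 ≤ t) : t - 1 ≤ m t + 1 :=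
    (sub_one_le_floor_mul_two_mul_sub_one hc0 ht).trans (Nat.le_succ _)
  have hm₂ (t : ℕ) (ht : 1 ≤ t) : m t < 2 * t := floor_mul_two_mul_sub_one_lt hc1 ht
  have hlim (F : ℝ × ℝ → ℝ) (hF : Continuous F) :
      Tendsto (fun t : ℕ => F ((m t : ℝ) / t, 1 / t)) atTop (nhds (F (2 * c, 0))) :=
    hF.continuousAt.tendsto.comp <|
      (tendsto_floor_mul_two_mul_sub_one_div (by linarith)).prodMk_nhds
        tendsto_one_div_atTop_nhds_zero_nat
  constructor
  · convert (hlim (fun p => ((1 - p.2) * (2 * p.1 + 3 * p.2) - (1 - p.2) ^ 2) / 8)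
      (by fun_prop)).congr' (eventually_atTop.2 ⟨1, fun t ht =>
        (C3_half_div_sq_eq ht (hm₁ t ht) (hm₂ t ht)).symm⟩) using 2
    ring
  · convert (hlim (fun p => ((p.1 + p.2) * (p.1 + 2 * p.2) * (p.1 + 3 * p.2) -
        (p.1 - 1 + 2 * p.2) * (p.1 - 1 + 3 * p.2) * (p.1 - 1 + 4 * p.2)) / 48)
      (by fun_prop)).congr' (eventually_atTop.2 ⟨1, fun t ht =>
        (S3_half_div_cube_eq ht (hm₁ t ht) (hm₂ t ht)).symm⟩) using 2
    ring
end

section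
/- There is an N such that the following holds for every even integer n ≥ N. Let c = 2^{n−3}/(n·ln n) and let S be any set of vertices of the hypercube Q_n with |S| ≤ c. Then there is a connected component K of the graph obtained from Q_n by deleting S such that the total number of vertices of Q_n lying outside both S and K is less than (1/2)·C(n, n/2), where C(n, n/2) is the central binomial coefficient. -/
/-!
Talagrand's inequality `√2 |A| (2ⁿ - |A|) / 2ⁿ ≤ ∑_{x ∈ A} √h_A(x)`, where `h_A(x)` counts the
neighbours of `x` outside `A`, follows by induction on `n`, splitting `A` along the first
coordinate. As `h_A ≤ n` and `h_A` vanishes off the inner boundary of `A`, a vertex set `S`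
separating `X` from `Xᶜ` has `|S| ≥ √2 |X| |Xᶜ| / (2ⁿ √n)`. If every component of `Q_n - S`
missed at least `C(n, n/2) / 2` vertices, the components could be grouped into a set `X` with
`|X|, |Xᶜ| ≥ C(n, n/2) / 4`; since `C(2k, k) ≥ 4ᵏ / (2√k)`, this forces `|S| ≥ 2ⁿ / (8n)`,
contradicting `|S| ≤ 2ⁿ⁻³ / (n ln n)`.
-/

open SimpleGraph

/-- The `n`-dimensional hypercube `Q_n`: vertices are binary strings of length `n`,
two strings being adjacent iff they differ in exactly one coordinate. -/
def hypercube (n : ℕ) : SimpleGraph (Fin n → Bool) where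
  Adj x y := ∃ i, x i ≠ y i ∧ ∀ j, j ≠ i → x j = y j
  symm := by
    constructor
    rintro x y ⟨i, h1, h2⟩
    exact ⟨i, h1.symm, fun j hj => (h2 j hj).symm⟩
  loopless := by
    constructor
    rintro x ⟨i, h, -⟩
    exact h rfl

lemma mul_sqrt_add_le_sqrt_add_one {l m u : ℝ} (hlm : l ^ 2 + m ^ 2 ≤ 1) (hu : 0 ≤ u) :
    l * √u + m ≤ √(u + 1) :=
  Real.le_sqrt_of_sq_le <| by
    nlinarith [Real.sq_sqrt hu, Real.sqrt_nonneg u, sq_nonneg (m * √u - l)]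

lemma sqrt_sq_add_sq_le_of_forall {X Y P : ℝ} (hX : 0 ≤ X) (hY : 0 ≤ Y)
    (h : ∀ l m : ℝ, 0 ≤ l → 0 ≤ m → l ^ 2 + m ^ 2 ≤ 1 → l * X + m * Y ≤ P) :
    √(X ^ 2 + Y ^ 2) ≤ P := by
  have hR2 : √(X ^ 2 + Y ^ 2) ^ 2 = X ^ 2 + Y ^ 2 := Real.sq_sqrt (by positivity)
  rcases (Real.sqrt_nonneg (X ^ 2 + Y ^ 2)).eq_or_lt with hR0 | hR
  · rw [← hR0]
    simpa using h 0 0 le_rfl le_rfl (by norm_num)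
  · have hunit : (X / √(X ^ 2 + Y ^ 2)) ^ 2 + (Y / √(X ^ 2 + Y ^ 2)) ^ 2 = 1 := by
      rw [div_pow, div_pow, ← add_div, div_eq_one_iff_eq (by positivity), hR2]
    convert h _ _ (by positivity) (by positivity) hunit.le using 1
    field_simp
    linarith

noncomputable def talagrandBound (N a : ℝ) : ℝ := √2 * a * (N - a) / N

lemma talagrandBound_nonneg {N a : ℝ} (ha : 0 ≤ a) (haN : a ≤ N) : 0 ≤ talagrandBound N a :=
  div_nonneg (mul_nonneg (mul_nonneg (Real.sqrt_nonneg _) ha) (sub_nonneg.2 haN)) (ha.trans haN)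

lemma talagrandBound_two_mul_le {N a b : ℝ} (hN : N ≠ 0) :
    talagrandBound (2 * N) (a + b) ≤
      √((talagrandBound N a + talagrandBound N b) ^ 2 + (a - b) ^ 2) := by
  refine Real.le_sqrt_of_sq_le ?_
  unfold talagrandBound
  field_simp
  rw [Real.sq_sqrt zero_le_two]
  gcongr ?_ / _
  nlinarith [sq_nonneg ((a - b) * (N - a - b)), sq_nonneg ((a - b) ^ 2)]

open Finset in
lemma Finset.exists_subset_le_sum_lt_two_mul {ι : Type*} (s : Finset ι) (f : ι → ℝ) {r : ℝ}
    (hr : 0 < r) (hsmall : ∀ i ∈ s, f i < r) (htot : r ≤ ∑ i ∈ s, f i) :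
    ∃ t ⊆ s, r ≤ ∑ i ∈ t, f i ∧ ∑ i ∈ t, f i < 2 * r := by
  classical
  induction s using Finset.induction_on with
  | empty => rw [sum_empty] at htot; linarith
  | insert a s ha ih =>
    by_cases hs : r ≤ ∑ i ∈ s, f i
    · obtain ⟨t, hts, ht⟩ := ih (fun i hi => hsmall i (mem_insert_of_mem hi)) hs
      exact ⟨t, hts.trans (subset_insert a s), ht⟩
    · refine ⟨insert a s, Subset.rfl, htot, ?_⟩
      rw [sum_insert ha]
      linarith [hsmall a (mem_insert_self a s)]

namespace SimpleGraph

open Finset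

variable {V : Type*} [Fintype V] [DecidableEq V] (G : SimpleGraph V)

/-- `U` is the complement of a component with at least `μ` vertices if there is one, and
otherwise a greedy union of components with between `μ` and `2μ` vertices. -/
theorem exists_adj_closed_le_card_and_le_card_compl {μ : ℝ} (hμ : 0 < μ)
    (h3μ : 3 * μ ≤ Fintype.card V) (hK : ∀ K : G.ConnectedComponent, μ ≤ K.suppᶜ.ncard) :
    ∃ U : Finset V, (∀ u v, G.Adj u v → u ∈ U → v ∈ U) ∧ μ ≤ #U ∧ μ ≤ #Uᶜ := by
  classical
  have : Fintype G.ConnectedComponent := Fintype.ofFinite _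
  set f : G.ConnectedComponent → ℝ := fun K => #{v | G.connectedComponentMk v = K}
  by_cases hbig : ∃ K, μ ≤ f K
  · obtain ⟨K, hfK⟩ := hbig
    refine ⟨({v | G.connectedComponentMk v ≠ K} : Finset V), fun u v huv hu => by
        simpa [ConnectedComponent.connectedComponentMk_eq_of_adj huv] using hu,
      ?_, ?_⟩
    · convert hK K using 2
      rw [Set.ncard_eq_toFinset_card']
      congr 1
      ext v
      simp [ConnectedComponent.mem_supp_iff]
    · simpa [compl_filter] using hfK
  · simp only [not_exists, not_le] at hbig
    have hsum : ∀ T : Finset G.ConnectedComponent,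
        ∑ K ∈ T, f K = #{v | G.connectedComponentMk v ∈ T} := by
      intro T
      simp only [f]
      exact_mod_cast sum_card_fiberwise_eq_card_filter _ _ _
    obtain ⟨T, -, hT₁, hT₂⟩ := exists_subset_le_sum_lt_two_mul univ f hμ (fun K _ => hbig K)
      (by rw [hsum]; simp only [mem_univ, filter_true, card_univ]; linarith)
    refine ⟨({v | G.connectedComponentMk v ∈ T} : Finset V), fun u v huv hu => by
        simpa [ConnectedComponent.connectedComponentMk_eq_of_adj huv] using hu,
      by rwa [← hsum], ?_⟩
    rw [card_compl, Nat.cast_sub (card_le_univ _), ← hsum]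
    linarith

end SimpleGraph

theorem Nat.sixteen_pow_le_four_mul_mul_centralBinom_sq {k : ℕ} (hk : 0 < k) :
    16 ^ k ≤ 4 * k * k.centralBinom ^ 2 := by
  induction k, hk using Nat.le_induction with
  | base => simp [Nat.centralBinom, Nat.choose]
  | succ k _ ih =>
    have hrec := Nat.succ_mul_centralBinom_succ k
    refine Nat.le_of_mul_le_mul_left ?_ k.succ_pos
    calc (k + 1) * 16 ^ (k + 1) = 16 * ((k + 1) * 16 ^ k) := by ring
      _ ≤ 16 * ((k + 1) * (4 * k * k.centralBinom ^ 2)) := by gcongr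
      _ = 16 * (4 * k * (k + 1) * k.centralBinom ^ 2) := by ring
      _ ≤ 16 * ((2 * k + 1) ^ 2 * k.centralBinom ^ 2) :=
        Nat.mul_le_mul_left 16 (Nat.mul_le_mul_right _ (by nlinarith))
      _ = (k + 1) * (4 * (k + 1) * (k + 1).centralBinom ^ 2) := by
        rw [show (k + 1) * (4 * (k + 1) * (k + 1).centralBinom ^ 2)
          = 4 * ((k + 1) * (k + 1).centralBinom) ^ 2 by ring, hrec]
        ring

theorem Nat.four_pow_le_two_mul_sqrt_mul_centralBinom {k : ℕ} (hk : 0 < k) :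
    (4 : ℝ) ^ k ≤ 2 * √k * k.centralBinom := by
  refine (pow_le_pow_iff_left₀ (by positivity) (by positivity) two_ne_zero).1 ?_
  rw [← pow_mul, mul_comm k, pow_mul, mul_pow, mul_pow, Real.sq_sqrt (Nat.cast_nonneg k)]
  exact_mod_cast Nat.sixteen_pow_le_four_mul_mul_centralBinom_sq hk

namespace Hypercube

open Finset

variable {n : ℕ}

def flipCoord (x : Fin n → Bool) (i : Fin n) : Fin n → Bool := Function.update x i (!x i)

@[simp]
lemma flipCoord_flipCoord (x : Fin n → Bool) (i : Fin n) : flipCoord (flipCoord x i) i = x := by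
  simp [flipCoord]

lemma hypercube_adj_flipCoord (x : Fin n → Bool) (i : Fin n) :
    (hypercube n).Adj x (flipCoord x i) :=
  ⟨i, by simp [flipCoord], fun j hj => by simp [flipCoord, Function.update_of_ne hj]⟩

lemma flipCoord_cons_zero (b : Bool) (y : Fin n → Bool) :
    flipCoord (Fin.cons b y : Fin (n + 1) → Bool) 0 = Fin.cons (!b) y := by
  simp [flipCoord, Fin.update_cons_zero]

lemma flipCoord_cons_succ (b : Bool) (y : Fin n → Bool) (j : Fin n) :
    flipCoord (Fin.cons b y : Fin (n + 1) → Bool) j.succ = Fin.cons b (flipCoord y j) := by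
  simp [flipCoord, Fin.cons_update]

/-- `h_A(x)` in Talagrand's notation. -/
def exteriorDegree (A : Finset (Fin n → Bool)) (x : Fin n → Bool) : ℕ :=
  #{i | flipCoord x i ∉ A}

def innerBoundary (A : Finset (Fin n → Bool)) : Finset (Fin n → Bool) :=
  {x ∈ A | ∃ i, flipCoord x i ∉ A}

def fiber (A : Finset (Fin (n + 1) → Bool)) (b : Bool) : Finset (Fin n → Bool) :=
  {y | (Fin.cons b y : Fin (n + 1) → Bool) ∈ A}

lemma sum_eq_sum_fiber {M : Type*} [AddCommMonoid M] (A : Finset (Fin (n + 1) → Bool))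
    (g : (Fin (n + 1) → Bool) → M) :
    ∑ x ∈ A, g x = ∑ b, ∑ y ∈ fiber A b, g (Fin.cons b y) := by
  simp only [fiber, sum_filter, ← Fintype.sum_prod_type', ← Fintype.sum_ite_mem A g]
  exact (Fintype.sum_equiv (Fin.consEquiv fun _ => Bool) _ (fun x => if x ∈ A then g x else 0)
    fun _ => rfl).symm

lemma exteriorDegree_cons (A : Finset (Fin (n + 1) → Bool)) (b : Bool) (y : Fin n → Bool) :
    exteriorDegree A (Fin.cons b y) =
      (if Fin.cons (!b) y ∈ A then 0 else 1) + exteriorDegree (fiber A b) y := by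
  simp [exteriorDegree, Fin.card_filter_univ_succ', flipCoord_cons_zero, flipCoord_cons_succ,
    fiber]

/-- The neighbour `(!b, y)` of `(b, y) ∈ A` is either in `A` or a new exterior neighbour; in the
second case `l √h + m ≤ √(h + 1)` pays for the `m`-term. -/
lemma mul_sum_sqrt_fiber_add_mul_card_le (A : Finset (Fin (n + 1) → Bool)) {l m : ℝ}
    (hlm : l ^ 2 + m ^ 2 ≤ 1) :
    l * ∑ b, ∑ y ∈ fiber A b, √(exteriorDegree (fiber A b) y) +
        m * ∑ b, (#(fiber A b \ fiber A (!b)) : ℝ) ≤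
      ∑ x ∈ A, √(exteriorDegree A x) := by
  have hl1 : l ≤ 1 := by nlinarith [sq_nonneg m]
  rw [sum_eq_sum_fiber, mul_sum, mul_sum, ← sum_add_distrib]
  refine sum_le_sum fun b _ => ?_
  rw [sdiff_eq_filter, card_filter, Nat.cast_sum, mul_sum, mul_sum, ← sum_add_distrib]
  refine sum_le_sum fun y _ => ?_
  rw [exteriorDegree_cons]
  by_cases hy : Fin.cons (!b) y ∈ A
  · have : y ∈ fiber A (!b) := by simpa [fiber] using hy
    simpa [hy, this] using mul_le_of_le_one_left (Real.sqrt_nonneg _) hl1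
  · have : y ∉ fiber A (!b) := by simpa [fiber] using hy
    simpa [hy, this, add_comm] using mul_sqrt_add_le_sqrt_add_one hlm (Nat.cast_nonneg _)

theorem talagrandBound_le_sum_sqrt_exteriorDegree (A : Finset (Fin n → Bool)) :
    talagrandBound (2 ^ n) #A ≤ ∑ x ∈ A, √(exteriorDegree A x) := by
  induction n with
  | zero =>
    have hA : #A ≤ 1 := by simpa using card_le_univ A
    refine le_trans ?_ (sum_nonneg fun _ _ => Real.sqrt_nonneg _)
    interval_cases #A <;> simp [talagrandBound]
  | succ n ih =>
    set a : Bool → ℝ := fun b => #(fiber A b)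
    have ha : ∀ b, 0 ≤ a b ∧ a b ≤ 2 ^ n := fun b =>
      ⟨Nat.cast_nonneg _, by simpa using (Nat.cast_le (α := ℝ)).2 (card_le_univ (fiber A b))⟩
    have hcard : (#A : ℝ) = a true + a false := by
      simpa [a] using sum_eq_sum_fiber A (fun _ => (1 : ℝ))
    set X := ∑ b, ∑ y ∈ fiber A b, √(exteriorDegree (fiber A b) y)
    set Y := ∑ b, (#(fiber A b \ fiber A (!b)) : ℝ)
    have hX : talagrandBound (2 ^ n) (a true) + talagrandBound (2 ^ n) (a false) ≤ X := by
      simpa only [X, Fintype.sum_bool] using add_le_add (ih (fiber A true)) (ih (fiber A false))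
    have hY : |a true - a false| ≤ Y := by
      simp only [Y, a, Fintype.sum_bool, Bool.not_true, Bool.not_false]
      have h₁ : (#(fiber A true) : ℝ) ≤ #(fiber A true \ fiber A false) + #(fiber A false) :=
        mod_cast card_le_card_sdiff_add_card
      have h₂ : (#(fiber A false) : ℝ) ≤ #(fiber A false \ fiber A true) + #(fiber A true) :=
        mod_cast card_le_card_sdiff_add_card
      rw [abs_sub_le_iff]
      constructor <;> linarith
    have hφ : 0 ≤ talagrandBound (2 ^ n) (a true) + talagrandBound (2 ^ n) (a false) :=
      add_nonneg (talagrandBound_nonneg (ha _).1 (ha _).2) (talagrandBound_nonneg (ha _).1 (ha _).2)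
    calc talagrandBound (2 ^ (n + 1)) #A
        = talagrandBound (2 * 2 ^ n) (a true + a false) := by rw [hcard, pow_succ']
      _ ≤ √((talagrandBound (2 ^ n) (a true) + talagrandBound (2 ^ n) (a false)) ^ 2
            + (a true - a false) ^ 2) := talagrandBound_two_mul_le (by positivity)
      _ ≤ √(X ^ 2 + Y ^ 2) := by
        rw [← sq_abs (a true - a false)]
        gcongr
      _ ≤ ∑ x ∈ A, √(exteriorDegree A x) :=
        sqrt_sq_add_sq_le_of_forall (hφ.trans hX) ((abs_nonneg _).trans hY)
          fun _ _ _ _ hlm => mul_sum_sqrt_fiber_add_mul_card_le A hlm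

lemma sum_sqrt_exteriorDegree_le (A : Finset (Fin n → Bool)) :
    ∑ x ∈ A, √(exteriorDegree A x) ≤ √n * #(innerBoundary A) := by
  rw [innerBoundary, ← sum_filter_of_ne (p := fun x => ∃ i, flipCoord x i ∉ A)]
  · refine (sum_le_card_nsmul _ _ (√n) fun x _ => ?_).trans_eq
      (by rw [nsmul_eq_mul, mul_comm])
    exact Real.sqrt_le_sqrt (by exact_mod_cast (card_filter_le _ _).trans_eq (card_fin n))
  · intro x _ hx
    by_contra! h
    simp [exteriorDegree, h] at hx

lemma innerBoundary_compl_subset {S X : Finset (Fin n → Bool)}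
    (hX : ∀ x ∈ X, ∀ i, flipCoord x i ∉ S → flipCoord x i ∈ X) : innerBoundary Xᶜ ⊆ S := by
  intro x hx
  simp only [innerBoundary, mem_filter, mem_compl, not_not] at hx
  obtain ⟨hxX, i, hi⟩ := hx
  by_contra hxS
  exact hxX (by simpa using hX _ hi i (by simpa using hxS))

theorem sqrt_two_mul_card_mul_le {S X : Finset (Fin n → Bool)}
    (hX : ∀ x ∈ X, ∀ i, flipCoord x i ∉ S → flipCoord x i ∈ X) :
    √2 * #X * (2 ^ n - #X) ≤ 2 ^ n * √n * #S := by
  have hcompl : (#Xᶜ : ℝ) = 2 ^ n - #X := by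
    rw [card_compl, Nat.cast_sub (card_le_univ X)]
    simp
  have h := (talagrandBound_le_sum_sqrt_exteriorDegree Xᶜ).trans <|
    (sum_sqrt_exteriorDegree_le Xᶜ).trans <| mul_le_mul_of_nonneg_left
      (Nat.cast_le.2 (card_le_card (innerBoundary_compl_subset hX))) (Real.sqrt_nonneg n)
  rw [talagrandBound, hcompl, div_le_iff₀ (by positivity)] at h
  linarith

theorem le_sqrt_mul_card_of_separates {S X : Finset (Fin n → Bool)}
    (hX : ∀ x ∈ X, ∀ i, flipCoord x i ∉ S → flipCoord x i ∈ X) {μ : ℝ}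
    (h₁ : μ ≤ #X) (h₂ : μ ≤ 2 ^ n - #X) : μ ≤ √(2 * n) * #S := by
  have hsep := sqrt_two_mul_card_mul_le hX
  have hX2 : (#X : ℝ) ≤ 2 ^ n := by simpa using (Nat.cast_le (α := ℝ)).2 (card_le_univ X)
  have hprod : μ * 2 ^ n ≤ 2 * (#X * (2 ^ n - #X)) := by
    nlinarith [mul_nonneg (Nat.cast_nonneg #X : (0 : ℝ) ≤ #X) (sub_nonneg.2 h₂),
      mul_nonneg (sub_nonneg.2 hX2) (sub_nonneg.2 h₁)]
  have h₃ : √2 * μ * 2 ^ n ≤ 2 * √n * #S * 2 ^ n :=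
    calc √2 * μ * 2 ^ n = √2 * (μ * 2 ^ n) := by ring
      _ ≤ √2 * (2 * (#X * (2 ^ n - #X))) := by gcongr
      _ = 2 * (√2 * #X * (2 ^ n - #X)) := by ring
      _ ≤ 2 * √n * #S * 2 ^ n := by linarith
  have h₄ : √2 * μ ≤ 2 * √n * #S := le_of_mul_le_mul_right h₃ (by positivity)
  calc μ = √2 * (√2 * μ) / 2 := by rw [← mul_assoc, Real.mul_self_sqrt zero_le_two]; ring
    _ ≤ √2 * (2 * √n * #S) / 2 := by gcongr
    _ = √(2 * n) * #S := by rw [Real.sqrt_mul zero_le_two]; ring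

theorem le_sqrt_mul_card_of_le_ncard_compl_supp (S : Finset (Fin n → Bool)) {μ : ℝ}
    (hμ : 0 < μ) (h3μ : 3 * μ ≤ 2 ^ n - #S)
    (hK : ∀ K : ((hypercube n).induce {v | v ∉ S}).ConnectedComponent, μ ≤ K.suppᶜ.ncard) :
    μ ≤ √(2 * n) * #S := by
  have hV : (Fintype.card ({v | v ∉ S} : Set (Fin n → Bool)) : ℝ) = 2 ^ n - #S := by
    rw [← Set.toFinset_card, Set.toFinset_ofPred, filter_not, filter_univ_mem, card_univ_sdiff,
      Nat.cast_sub (card_le_univ S)]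
    simp
  obtain ⟨U, hU, h₁, h₂⟩ :=
    ((hypercube n).induce {v | v ∉ S}).exists_adj_closed_le_card_and_le_card_compl hμ
      (hV ▸ h3μ) hK
  set X := U.map (Function.Embedding.subtype _)
  have hX : ∀ x ∈ X, ∀ i, flipCoord x i ∉ S → flipCoord x i ∈ X := by
    intro x hx i hi
    obtain ⟨u, hu, rfl⟩ := mem_map.1 hx
    exact mem_map.2 ⟨⟨_, hi⟩, hU u _ (hypercube_adj_flipCoord _ i) hu, rfl⟩
  have hUc : (#Uᶜ : ℝ) ≤ 2 ^ n - #X := by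
    rw [card_compl, Nat.cast_sub (card_le_univ _), hV, card_map]
    linarith [(Nat.cast_nonneg #S : (0 : ℝ) ≤ #S)]
  exact le_sqrt_mul_card_of_separates hX (by simpa [X]) (h₂.trans hUc)

end Hypercube

lemma sixteen_mul_mul_lt_four_pow {k : ℕ} (hk : 2 ≤ k) {s : ℝ}
    (hs : s ≤ (2 : ℝ) ^ (k + k - 3) / ((k + k : ℕ) * Real.log (k + k : ℕ))) :
    16 * k * s < 4 ^ k := by
  have h4 : (4 : ℝ) ≤ k + k := by exact_mod_cast (by omega : 4 ≤ k + k)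
  have hlog : 1 < Real.log (k + k) := by
    rw [Real.lt_log_iff_exp_lt (by positivity)]
    linarith [Real.exp_one_lt_d9]
  have hpow : (2 : ℝ) ^ (k + k - 3) = 4 ^ k / 8 := by
    rw [eq_div_iff (by norm_num), show (8 : ℝ) = 2 ^ 3 by norm_num, ← pow_add,
      Nat.sub_add_cancel (by omega), pow_add, ← mul_pow]
    norm_num
  rw [hpow, Nat.cast_add, div_div, le_div_iff₀ (by nlinarith)] at hs
  nlinarith [mul_pos (sub_pos.2 hlog) (pow_pos four_pos k : (0 : ℝ) < 4 ^ k)]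

open Hypercube Finset

/-- For all sufficiently large even `n`: if `S` is any set of
vertices of the hypercube `Q_n` with `|S| ≤ 2^(n-3)/(n ln n)`, then there is a
connected component `K` of `Q_n - S` such that the number of vertices of `Q_n` lying
outside both `S` and `K` is less than `(1/2) · C(n, n/2)`. -/
theorem hypercube_small_component :
    ∃ N : ℕ, ∀ n : ℕ, N ≤ n → Even n →
      ∀ S : Finset (Fin n → Bool),
        (S.card : ℝ) ≤ (2 : ℝ) ^ (n - 3) / ((n : ℝ) * Real.log n) →
        ∃ K : ((hypercube n).induce {v | v ∉ S}).ConnectedComponent,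
          (Set.ncard {v : {v : Fin n → Bool // v ∉ S} | v ∉ K.supp} : ℝ) <
            (1 / 2 : ℝ) * (n.choose (n / 2)) := by
  refine ⟨4, fun n hn ⟨k, hk⟩ S hS => ?_⟩
  subst hk
  by_contra! hcomp
  have hC : (k + k).choose ((k + k) / 2) = k.centralBinom := by
    rw [Nat.centralBinom_eq_two_mul_choose]; congr 1 <;> omega
  have hS' : 16 * k * #S < (4 : ℝ) ^ k := sixteen_mul_mul_lt_four_pow (by omega) hS
  have h4k : (2 : ℝ) ^ (k + k) = 4 ^ k := by rw [← two_mul, pow_mul]; norm_num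
  have hCle : (k.centralBinom : ℝ) ≤ 4 ^ k := by exact_mod_cast k.centralBinom_le_four_pow
  have hk2 : (2 : ℝ) ≤ k := by exact_mod_cast (by omega : 2 ≤ k)
  have hsep := le_sqrt_mul_card_of_le_ncard_compl_supp S (μ := k.centralBinom / 4)
    (div_pos (by exact_mod_cast k.centralBinom_pos) four_pos)
    (by rw [h4k]; nlinarith [mul_le_mul_of_nonneg_right hk2 (Nat.cast_nonneg (α := ℝ) #S)])
    fun K => (hcomp K).trans' (by rw [hC]; linarith)
  rw [show 2 * ((k + k : ℕ) : ℝ) = 2 ^ 2 * k by push_cast; ring, Real.sqrt_mul (by positivity),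
    Real.sqrt_sq zero_le_two] at hsep
  have := calc (4 : ℝ) ^ k
      ≤ 2 * √k * k.centralBinom := Nat.four_pow_le_two_mul_sqrt_mul_centralBinom (by omega)
    _ ≤ 16 * k * #S := by
      nlinarith [Real.mul_self_sqrt (Nat.cast_nonneg (α := ℝ) k), Real.sqrt_nonneg k]
  exact this.not_gt hS'
end

section
/- There is an N such that for every even integer n ≥ N, setting k = ⌊n/2 − (1/2)·√(n·(ln n + ln ln n))⌋, we have Σ_{i=0}^{k} C(n, i) ≤ 2^n / √(n·ln n) (as real numbers), where C(n,i) denotes the binomial coefficient. -/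
/-!
Write `n = 2m` and `k = m - j`. Below the middle, consecutive binomial coefficients shrink at
least by the factor `k / (n - k + 1)`, so the lower tail up to `k` is a geometric series:
`∑_{i ≤ k} C(n, i) ≤ C(n, k) (m + j + 1) / (2j + 1)`. Multiplying the ratios
`(m - i) / (m + i + 1) ≤ exp (-(2i + 1) / (m + j))` for `i < j` gives
`C(2m, m - j) ≤ C(2m, m) exp (-j² / (m + j))`, and `C(2m, m) ≤ 4^m / √(2m + 1)`.
With `j ≈ √(n (ln n + ln ln n)) / 2` the exponent is at least `ln n / 2`, so the two square
roots `√n` cancel the factor `2m` of the geometric series, leaving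
`4^m / (2j + 1) ≤ 2^n / √(n ln n)`.
-/

open Finset Real Filter

namespace Nat

theorem centralBinom_sq_mul_le (m : ℕ) : centralBinom m ^ 2 * (2 * m + 1) ≤ 16 ^ m := by
  induction m with
  | zero => simp
  | succ m ih =>
    have hrec := succ_mul_centralBinom_succ m
    refine Nat.le_of_mul_le_mul_left ?_ (by positivity : 0 < (m + 1) ^ 2)
    calc (m + 1) ^ 2 * (centralBinom (m + 1) ^ 2 * (2 * (m + 1) + 1))
        = ((m + 1) * centralBinom (m + 1)) ^ 2 * (2 * m + 3) := by ring
      _ = 4 * (2 * m + 1) * (2 * m + 3) * (centralBinom m ^ 2 * (2 * m + 1)) := by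
        rw [hrec]; ring
      _ ≤ (m + 1) ^ 2 * 16 * 16 ^ m := Nat.mul_le_mul (by nlinarith) ih
      _ = (m + 1) ^ 2 * 16 ^ (m + 1) := by ring

theorem cast_centralBinom_le (m : ℕ) : (centralBinom m : ℝ) ≤ 4 ^ m / √(2 * m + 1) := by
  rw [le_div_iff₀ (by positivity),
    ← pow_le_pow_iff_left₀ (by positivity) (by positivity) two_ne_zero,
    mul_pow, sq_sqrt (by positivity), ← pow_mul, mul_comm m, pow_mul]
  exact_mod_cast centralBinom_sq_mul_le m

theorem cast_choose_sub_one {n i : ℕ} (hi : 0 < i) (hin : i ≤ n) :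
    (n.choose (i - 1) : ℝ) = n.choose i * (i / (n - i + 1)) := by
  have h := congrArg (Nat.cast : ℕ → ℝ) (choose_succ_right_eq n (i - 1))
  push_cast [Nat.sub_add_cancel hi, Nat.cast_sub (by omega : i - 1 ≤ n), Nat.cast_sub hi] at h
  have hpos : (0 : ℝ) < n - i + 1 := by
    have : (i : ℝ) ≤ n := by exact_mod_cast hin
    linarith
  field_simp
  linarith

theorem cast_choose_sub_le_mul_pow {n k : ℕ} (hkn : k ≤ n) {d : ℕ} (hdk : d ≤ k) :
    (n.choose (k - d) : ℝ) ≤ n.choose k * (k / (n - k + 1)) ^ d := by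
  induction d with
  | zero => simp
  | succ d ih =>
    have hkn' : (k : ℝ) ≤ n := by exact_mod_cast hkn
    have hkd : ((k - d : ℕ) : ℝ) = k - d := Nat.cast_sub (by omega)
    have hratio : ((k - d : ℕ) : ℝ) / (n - (k - d : ℕ) + 1) ≤ k / (n - k + 1) := by
      rw [hkd, div_le_div_iff₀ (by linarith) (by linarith)]
      nlinarith
    calc (n.choose (k - (d + 1)) : ℝ)
        = n.choose (k - d) * ((k - d : ℕ) / (n - (k - d : ℕ) + 1)) := by
          rw [← Nat.cast_choose_sub_one (by omega) (by omega)]; rfl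
      _ ≤ n.choose k * (k / (n - k + 1)) ^ d * (k / (n - k + 1)) :=
          mul_le_mul (ih (by omega)) hratio (div_nonneg (by positivity) (by rw [hkd]; linarith))
            (by positivity)
      _ = n.choose k * (k / (n - k + 1)) ^ (d + 1) := by ring

theorem sum_range_choose_le_choose_mul {n k : ℕ} (hk : 2 * k ≤ n) :
    ∑ i ∈ range (k + 1), (n.choose i : ℝ) ≤
      n.choose k * ((n - k + 1) / (n - 2 * k + 1)) := by
  have hk' : 2 * (k : ℝ) ≤ n := by exact_mod_cast hk
  set r : ℝ := k / (n - k + 1)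
  have hr0 : 0 ≤ r := div_nonneg (by positivity) (by linarith)
  have hr1 : r < 1 := (div_lt_one (by linarith)).2 (by linarith)
  have hgeom : ∑ d ∈ range (k + 1), r ^ d ≤ (n - k + 1) / (n - 2 * k + 1) := by
    calc ∑ d ∈ range (k + 1), r ^ d ≤ r ^ 0 / (1 - r) := by
          rw [range_eq_Ico]; exact geom_sum_Ico_le_of_lt_one hr0 hr1
      _ = (n - k + 1) / (n - 2 * k + 1) := by
          have h1 : (n : ℝ) - k + 1 ≠ 0 := by linarith
          have h2 : (n : ℝ) - 2 * k + 1 ≠ 0 := by linarith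
          simp only [r, pow_zero]; field_simp; ring
  calc ∑ i ∈ range (k + 1), (n.choose i : ℝ)
      = ∑ d ∈ range (k + 1), (n.choose (k - d) : ℝ) := by
        rw [← sum_range_reflect]; simp
    _ ≤ ∑ d ∈ range (k + 1), n.choose k * r ^ d :=
        sum_le_sum fun d hd =>
          cast_choose_sub_le_mul_pow (by omega) (by simpa [Nat.lt_succ_iff] using hd)
    _ ≤ n.choose k * ((n - k + 1) / (n - 2 * k + 1)) := by
        rw [← mul_sum]; gcongr

end Nat

theorem choose_sub_le_centralBinom_mul_exp {m j M : ℕ} (hjm : j ≤ m) (hM : m + j ≤ M) :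
    ((2 * m).choose (m - j) : ℝ) ≤ m.centralBinom * exp (-j ^ 2 / M) := by
  induction j with
  | zero => simp [Nat.centralBinom_eq_two_mul_choose]
  | succ j ih =>
    have hM' : (m : ℝ) + j + 1 ≤ M := by exact_mod_cast hM
    have hmj : ((m - j : ℕ) : ℝ) = m - j := Nat.cast_sub (by omega)
    have hden : ((2 * m : ℕ) : ℝ) - (m - j : ℕ) + 1 = m + j + 1 := by
      rw [hmj]; push_cast; ring
    have hratio :
        ((m - j : ℕ) : ℝ) / ((2 * m : ℕ) - (m - j : ℕ) + 1) ≤ exp (-(2 * j + 1) / M) :=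
      calc ((m - j : ℕ) : ℝ) / ((2 * m : ℕ) - (m - j : ℕ) + 1)
          = 1 - (2 * j + 1) / (m + j + 1) := by
            rw [hden, hmj]; field_simp; ring
        _ ≤ 1 - (2 * j + 1) / (M : ℝ) := by gcongr
        _ ≤ exp (-(2 * j + 1) / M) := by
            rw [neg_div]; linarith [add_one_le_exp (-((2 * j + 1) / M))]
    calc ((2 * m).choose (m - (j + 1)) : ℝ)
        = (2 * m).choose (m - j) * ((m - j : ℕ) / ((2 * m : ℕ) - (m - j : ℕ) + 1)) := by
          rw [← Nat.cast_choose_sub_one (by omega) (by omega)]; rfl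
      _ ≤ m.centralBinom * exp (-j ^ 2 / M) * exp (-(2 * j + 1) / M) :=
          mul_le_mul (ih (by omega) (by omega)) hratio
            (div_nonneg (by positivity) (by rw [hden]; positivity)) (by positivity)
      _ = m.centralBinom * exp (-((j + 1 : ℕ) : ℝ) ^ 2 / M) := by
          rw [mul_assoc, ← exp_add]; push_cast; ring_nf

theorem sum_range_choose_two_mul_le_four_pow_div {m j : ℕ} (hjm : j < m)
    (hlog : Real.log (2 * m) * (m + j) ≤ 2 * j ^ 2) :
    ∑ i ∈ range (m - j + 1), ((2 * m).choose i : ℝ) ≤ 4 ^ m / (2 * j + 1) := by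
  have hjm' : (j : ℝ) + 1 ≤ m := by exact_mod_cast hjm
  have hm : (0 : ℝ) < 2 * m := by linarith [(j.cast_nonneg : (0 : ℝ) ≤ j)]
  have hratio : ((2 * m : ℕ) - (m - j : ℕ) + 1) / ((2 * m : ℕ) - 2 * (m - j : ℕ) + 1 : ℝ)
      = (m + j + 1) / (2 * j + 1) := by
    rw [Nat.cast_sub hjm.le]; push_cast; ring_nf
  have hexp : exp (-j ^ 2 / ((m + j : ℕ) : ℝ)) ≤ (√(2 * m))⁻¹ := by
    rw [← exp_log (Real.sqrt_pos.2 hm), ← exp_neg, exp_le_exp, log_sqrt hm.le]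
    push_cast
    rw [neg_div, neg_le_neg_iff, div_le_div_iff₀ (by positivity) (by linarith)]
    linarith
  have hcentral : ((2 * m).choose (m - j) : ℝ) ≤ 4 ^ m / √(2 * m + 1) * (√(2 * m))⁻¹ :=
    (choose_sub_le_centralBinom_mul_exp hjm.le le_rfl).trans
      (mul_le_mul (Nat.cast_centralBinom_le m) hexp (exp_pos _).le (by positivity))
  have hsqrt : 2 * m ≤ √(2 * m + 1) * √(2 * m) := by
    rw [← sqrt_mul (by positivity)]
    exact le_sqrt_of_sq_le (by nlinarith)
  calc ∑ i ∈ range (m - j + 1), ((2 * m).choose i : ℝ)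
      ≤ (2 * m).choose (m - j) * ((m + j + 1) / (2 * j + 1)) :=
        hratio ▸ Nat.sum_range_choose_le_choose_mul (by omega)
    _ ≤ 4 ^ m / √(2 * m + 1) * (√(2 * m))⁻¹ * (2 * m / (2 * j + 1)) := by
        gcongr; linarith
    _ = 4 ^ m / (2 * j + 1) * (2 * m / (√(2 * m + 1) * √(2 * m))) := by ring
    _ ≤ 4 ^ m / (2 * j + 1) :=
        mul_le_of_le_one_right (by positivity) ((div_le_one (by positivity)).2 hsqrt)

theorem exists_floor_natCast_sub_eq {m : ℕ} {s : ℝ} (hs : 0 ≤ s) (hsm : s ≤ m) :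
    ∃ j : ℕ, ⌊(m : ℝ) - s⌋₊ = m - j ∧ s ≤ j ∧ (j : ℝ) < s + 1 := by
  have hK : ⌊(m : ℝ) - s⌋₊ ≤ m := Nat.floor_le_of_le (by linarith)
  refine ⟨m - ⌊(m : ℝ) - s⌋₊, by omega, ?_, ?_⟩ <;>
    rw [Nat.cast_sub hK]
  · linarith [Nat.floor_le (by linarith : (0 : ℝ) ≤ m - s)]
  · linarith [Nat.lt_floor_add_one ((m : ℝ) - s)]

theorem eventually_one_lt_and_one_le_log_log_and_log_pow_three_le :
    ∀ᶠ n : ℕ in atTop,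
      1 < (n : ℝ) ∧ 1 ≤ Real.log (Real.log n) ∧ Real.log n ^ 3 ≤ n / 8 := by
  have hloglog := (tendsto_log_atTop.comp tendsto_log_atTop).eventually_ge_atTop 1
  have hpow := (isLittleO_pow_log_id_atTop (n := 3)).bound (c := 1 / 8) (by norm_num)
  have hreal :
    ∀ᶠ x : ℝ in atTop, 1 < x ∧ 1 ≤ Real.log (Real.log x) ∧ Real.log x ^ 3 ≤ x / 8 := by
    filter_upwards [eventually_gt_atTop 1, hloglog, hpow] with x hx h1 h2
    refine ⟨hx, h1, ?_⟩
    simpa [abs_of_nonneg (by linarith : (0 : ℝ) ≤ x), div_eq_inv_mul, abs_pow] using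
      (le_abs_self _).trans h2
  exact tendsto_natCast_atTop_atTop.eventually hreal

theorem log_mul_sqrt_add_one_le {x : ℝ} (hx : 1 < x) (hLL : 1 ≤ Real.log (Real.log x))
    (hL3 : Real.log x ^ 3 ≤ x / 8) :
    Real.log x * (√(x * (Real.log x + Real.log (Real.log x))) / 2 + 1) ≤ x / 2 := by
  set L := Real.log x
  have hL0 : 0 < L := log_pos hx
  have hLL_le : Real.log L ≤ L - 1 := log_le_sub_one_of_pos hL0
  have hsqrt : L * √(x * (L + Real.log L)) ≤ x / 2 := by
    rw [← sqrt_sq hL0.le, ← sqrt_mul (sq_nonneg _), sqrt_sq hL0.le,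
      ← sqrt_sq (by linarith : 0 ≤ x / 2)]
    refine sqrt_le_sqrt ?_
    calc L ^ 2 * (x * (L + Real.log L)) ≤ L ^ 2 * (x * (2 * L)) := by gcongr; linarith
      _ = 2 * x * L ^ 3 := by ring
      _ ≤ 2 * x * (x / 8) := by gcongr
      _ = (x / 2) ^ 2 := by ring
  have hL : L ≤ L ^ 3 := le_self_pow₀ (by linarith) (by norm_num)
  linarith

/-- For all sufficiently large even `n`, setting
`k = ⌊n/2 - (1/2)√(n(ln n + ln ln n))⌋`, we have
`Σ_{i=0}^{k} C(n, i) ≤ 2^n / √(n ln n)`. -/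
theorem sum_choose_le_of_even :
    ∃ N : ℕ, ∀ n : ℕ, N ≤ n → Even n →
      (∑ i ∈ Finset.range
          (⌊(n : ℝ) / 2 -
            Real.sqrt ((n : ℝ) * (Real.log n + Real.log (Real.log n))) / 2⌋₊ + 1),
          (n.choose i : ℝ)) ≤
        2 ^ n / Real.sqrt ((n : ℝ) * Real.log n) := by
  obtain ⟨N, hN⟩ :=
    eventually_atTop.mp eventually_one_lt_and_one_le_log_log_and_log_pow_three_le
  refine ⟨N, fun n hNn ⟨m, hnm⟩ => ?_⟩
  obtain ⟨hn1, hLL, hL3⟩ := hN n hNn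
  have hLs := log_mul_sqrt_add_one_le hn1 hLL hL3
  have hnm' : (n : ℝ) = 2 * m := by rw [hnm]; push_cast; ring
  set L := Real.log n
  set s := √(n * (L + Real.log L)) / 2 with hs
  have hL0 : 0 < L := log_pos hn1
  have hs0 : 0 ≤ s := by positivity
  have hsm : s + 1 ≤ m := by nlinarith [log_le_sub_one_of_pos hL0]
  have hs2 : 4 * s ^ 2 = n * (L + Real.log L) := by
    rw [hs, div_pow, sq_sqrt (by nlinarith)]; ring
  obtain ⟨j, hK, hsj, hjs⟩ := exists_floor_natCast_sub_eq (m := m) hs0 (by linarith)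
  -- `2 j² ≥ 2 s² = m (L + log L)` and `m log L ≥ m ≥ L (s + 1) > L j`.
  have hlog : Real.log (2 * m) * (m + j) ≤ 2 * j ^ 2 := by
    rw [← hnm']
    nlinarith [pow_le_pow_left₀ hs0 hsj 2, mul_le_mul_of_nonneg_left hjs.le hL0.le]
  calc ∑ i ∈ range (⌊(n : ℝ) / 2 - s⌋₊ + 1), (n.choose i : ℝ)
      = ∑ i ∈ range (m - j + 1), ((2 * m).choose i : ℝ) := by
        rw [hnm', mul_div_cancel_left₀ _ two_ne_zero, hK, hnm, two_mul]
    _ ≤ 4 ^ m / (2 * j + 1) :=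
        sum_range_choose_two_mul_le_four_pow_div
          (by exact_mod_cast (by linarith : (j : ℝ) < m)) hlog
    _ ≤ 2 ^ n / √(n * L) := by
        rw [show (2 : ℝ) ^ n = 4 ^ m by rw [hnm, ← two_mul, pow_mul]; norm_num]
        refine div_le_div_of_nonneg_left (by positivity) (sqrt_pos.2 (by positivity)) ?_
        calc √(n * L) ≤ √(n * (L + Real.log L)) := sqrt_le_sqrt (by gcongr; linarith)
          _ = 2 * s := by rw [hs]; ring
          _ ≤ 2 * j + 1 := by linarith
end
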